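/- arXiv:1803.04578 — 10 statements merged into one kernel-verified Lean document; each statement's English description precedes it below -/
import Mathlib

section
/- Let L be a finite set with a linear order ≺ and let W be a conflict weight on L. Suppose S ⊆ L satisfies, for every e ∈ S, Σ_{f∈S, f≺e} (W(f,e) + W(e,f)) ≤ 1/2 (i.e., S is semi-feasible). Then the subset S' = {e ∈ S : Σ_{f∈S} W(f,e) ≤ 1} is feasible and has |S'| ≥ |S|/2. -/
open Finset

open scoped Classical in
/-- If `S` is semi-feasible w.r.t. a conflict weight `W` and a linear order on `L`,
then `S' = {e ∈ S : W(S,e) ≤ 1}` is feasible and `|S'| ≥ |S|/2`. -/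
theorem semi_feasible_half {L : Type*} [LinearOrder L] (W : L → L → ℝ)
    (hW0 : ∀ e f : L, 0 ≤ W e f) (hWd : ∀ e : L, W e e = 0)
    (S : Finset L)
    (hsemi : ∀ e ∈ S, ∑ f ∈ S.filter (fun f => f < e), (W f e + W e f) ≤ 1 / 2) :
    (∀ e ∈ S.filter (fun e => ∑ f ∈ S, W f e ≤ 1),
        ∑ f ∈ S.filter (fun e => ∑ f ∈ S, W f e ≤ 1), W f e ≤ 1) ∧
      (S.card : ℝ) / 2 ≤ (S.filter (fun e => ∑ f ∈ S, W f e ≤ 1)).card := by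
  set T := S.filter (fun e => ∑ f ∈ S, W f e ≤ 1) with hT
  constructor
  · intro e he
    have heS := Finset.mem_filter.mp he
    calc ∑ f ∈ T, W f e ≤ ∑ f ∈ S, W f e := by
          apply Finset.sum_le_sum_of_subset_of_nonneg (Finset.filter_subset _ _)
          intro i _ _; exact hW0 i e
      _ ≤ 1 := heS.2
  · -- total sum bound
    have key : ∑ e ∈ S, ∑ f ∈ S, W f e ≤ (S.card : ℝ) / 2 := by
      have hsplit : ∑ e ∈ S, ∑ f ∈ S, W f e
          = ∑ e ∈ S, ∑ f ∈ S, ((if f < e then W f e else 0) + (if e < f then W f e else 0)) := by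
        apply Finset.sum_congr rfl; intro e _
        apply Finset.sum_congr rfl; intro f _
        rcases lt_trichotomy f e with h | h | h
        · simp [h, not_lt_of_gt h]
        · simp [h, hWd]
        · simp [h, not_lt_of_gt h]
      have hswap : ∑ e ∈ S, ∑ f ∈ S, (if e < f then W f e else 0)
          = ∑ e ∈ S, ∑ f ∈ S, (if f < e then W e f else 0) := by
        rw [Finset.sum_comm]
      calc ∑ e ∈ S, ∑ f ∈ S, W f e
          = ∑ e ∈ S, ∑ f ∈ S, (if f < e then W f e else 0)
            + ∑ e ∈ S, ∑ f ∈ S, (if e < f then W f e else 0) := by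
            rw [hsplit, ← Finset.sum_add_distrib]
            simp [Finset.sum_add_distrib]
        _ = ∑ e ∈ S, ∑ f ∈ S, (if f < e then (W f e + W e f) else 0) := by
            rw [hswap, ← Finset.sum_add_distrib]
            apply Finset.sum_congr rfl; intro e _
            rw [← Finset.sum_add_distrib]
            apply Finset.sum_congr rfl; intro f _
            split <;> simp
        _ = ∑ e ∈ S, ∑ f ∈ S.filter (fun f => f < e), (W f e + W e f) := by
            apply Finset.sum_congr rfl; intro e _
            rw [Finset.sum_filter]
        _ ≤ ∑ e ∈ S, (1 / 2 : ℝ) := Finset.sum_le_sum hsemi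
        _ = (S.card : ℝ) / 2 := by rw [Finset.sum_const, nsmul_eq_mul]; ring
    have hTsub : T ⊆ S := Finset.filter_subset _ _
    have hBcard : ((S \ T).card : ℝ) ≤ ∑ e ∈ S \ T, ∑ f ∈ S, W f e := by
      have : ∀ e ∈ S \ T, (1 : ℝ) ≤ ∑ f ∈ S, W f e := by
        intro e he
        rw [Finset.mem_sdiff, hT, Finset.mem_filter] at he
        have := he.2
        push_neg at this
        exact le_of_lt (this he.1)
      calc ((S \ T).card : ℝ) = ∑ e ∈ S \ T, (1 : ℝ) := by simp
        _ ≤ _ := Finset.sum_le_sum this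
    have hBle : ∑ e ∈ S \ T, ∑ f ∈ S, W f e ≤ ∑ e ∈ S, ∑ f ∈ S, W f e := by
      apply Finset.sum_le_sum_of_subset_of_nonneg (Finset.sdiff_subset)
      intro i _ _
      exact Finset.sum_nonneg fun f _ => hW0 f i
    have hcard : (S.card : ℝ) = T.card + (S \ T).card := by
      rw [Finset.card_sdiff_of_subset hTsub]
      have := Finset.card_le_card hTsub
      push_cast [Nat.cast_sub this]
      ring
    have : ((S \ T).card : ℝ) ≤ (S.card : ℝ) / 2 := le_trans hBcard (le_trans hBle key)
    linarith
end

section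
/- Let L be a finite set with a linear order ≺ and let W be a conflict weight on L that is ρ-inductive independent with respect to ≺, for some ρ > 0. Let S, I ⊆ L with I feasible, and suppose that every e ∈ I satisfies Σ_{f∈S, f≺e} (W(f,e) + W(e,f)) > 1/2. Then |I| ≤ 2ρ·|S|. -/
open Finset

/-- If `W` is `ρ`-inductive independent, `I` is feasible, and every edge of `I` failed the
greedy selection condition w.r.t. `S` (received/caused interference more than `1/2` from/to
earlier links of `S`), then `|I| ≤ 2ρ·|S|`. -/
theorem failed_links_bound {L : Type*} [LinearOrder L] (W : L → L → ℝ)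
    (hW0 : ∀ e f : L, 0 ≤ W e f) (hWd : ∀ e : L, W e e = 0)
    (ρ : ℝ) (hρ : 0 < ρ)
    (hind : ∀ (e : L) (I : Finset L), (∀ f ∈ I, ∑ g ∈ I, W g f ≤ 1) →
      (∀ f ∈ I, e < f) → ∑ f ∈ I, (W f e + W e f) ≤ ρ)
    (S I : Finset L)
    (hIfeas : ∀ e ∈ I, ∑ f ∈ I, W f e ≤ 1)
    (hfail : ∀ e ∈ I, 1 / 2 < ∑ f ∈ S.filter (fun f => f < e), (W f e + W e f)) :
    (I.card : ℝ) ≤ 2 * ρ * S.card := by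
  rcases I.eq_empty_or_nonempty with rfl | hne
  · simp
    positivity
  have key : ∑ e ∈ I, ∑ f ∈ S.filter (fun f => f < e), (W f e + W e f)
      = ∑ f ∈ S, ∑ e ∈ I.filter (fun e => f < e), (W f e + W e f) := by
    simp_rw [sum_filter]
    exact Finset.sum_comm
  have hbound : ∀ f ∈ S, ∑ e ∈ I.filter (fun e => f < e), (W e f + W f e) ≤ ρ := by
    intro f _
    refine hind f (I.filter (fun e => f < e)) ?_ ?_
    · intro g hg
      have hgI : g ∈ I := mem_of_mem_filter g hg
      refine le_trans ?_ (hIfeas g hgI)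
      exact sum_le_sum_of_subset_of_nonneg (filter_subset _ _) (fun h _ _ => hW0 h g)
    · intro g hg
      exact (mem_filter.mp hg).2
  have h1 : (I.card : ℝ) * (1 / 2) < ∑ e ∈ I, ∑ f ∈ S.filter (fun f => f < e), (W f e + W e f) := by
    calc (I.card : ℝ) * (1 / 2) = ∑ _e ∈ I, (1 / 2 : ℝ) := by rw [sum_const, nsmul_eq_mul]
    _ < _ := Finset.sum_lt_sum_of_nonempty hne hfail
  have h2 : ∑ f ∈ S, ∑ e ∈ I.filter (fun e => f < e), (W f e + W e f) ≤ ρ * S.card := by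
    calc ∑ f ∈ S, ∑ e ∈ I.filter (fun e => f < e), (W f e + W e f)
        ≤ ∑ _f ∈ S, ρ := by
          refine sum_le_sum fun f hf => ?_
          have := hbound f hf
          simpa [add_comm] using this
    _ = ρ * S.card := by rw [sum_const, nsmul_eq_mul, mul_comm]
  have := h1.trans_le (key ▸ h2)
  linarith
end

section
/- Let G be a finite simple graph and let S and I be sets of edges of G, each of which is acyclic (forms a forest). Then the number of edges in I whose two endpoints lie in the same connected component of the spanning subgraph (V(G), S) is at most |S|. -/
/-!
Write `c(X)` for the number of components of `(V, X)`, `n = |V|`. Adding an edge merges at most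
two components, and exactly two when it closes no cycle; so `n ≤ |S| + c(S)` for every edge set
`S`, and `|F| + c(F) ≤ n` for every loopless forest `F`. Each counted edge of `I` joins two
vertices of one component of `S`, so for the forest `T` of counted edges the components of `T`
refine those of `S`: `c(S) ≤ c(T)`. Hence `|T| ≤ n - c(T) ≤ n - c(S) ≤ |S|`.
-/

open Finset SimpleGraph

namespace SimpleGraph

variable {V : Type*} {G H : SimpleGraph V} {u v x y : V}

lemma Reachable.reachable_or_of_sup_edge (h : (G ⊔ edge u v).Reachable x y) :
    G.Reachable x y ∨ G.Reachable x u ∨ G.Reachable x v := by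
  obtain ⟨p⟩ := h
  induction p with
  | nil => exact .inl .rfl
  | cons hadj _ ih =>
    rcases hadj with hadj | hadj
    · exact ih.imp hadj.reachable.trans (Or.imp hadj.reachable.trans hadj.reachable.trans)
    · obtain ⟨⟨rfl, rfl⟩ | ⟨rfl, rfl⟩, -⟩ := (edge_adj ..).mp hadj
      · exact .inr (.inl .rfl)
      · exact .inr (.inr .rfl)

lemma Reachable.of_sup_edge (h : (G ⊔ edge u v).Reachable x y) (hx : ¬G.Reachable x v)
    (hy : ¬G.Reachable y v) : G.Reachable x y := by
  rcases h.reachable_or_of_sup_edge with hxy | hxu | hxv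
  · exact hxy
  · rcases h.symm.reachable_or_of_sup_edge with hyx | hyu | hyv
    · exact hyx.symm
    · exact hxu.trans hyu.symm
    · exact absurd hyv hy
  · exact absurd hxv hx

lemma card_connectedComponent_le_of_adj_imp_reachable [Finite V]
    (h : ∀ ⦃x y⦄, G.Adj x y → H.Reachable x y) :
    Nat.card H.ConnectedComponent ≤ Nat.card G.ConnectedComponent := by
  have hGH : G.Reachable ≤ H.Reachable := by
    rw [reachable_eq_reflTransGen, reachable_eq_reflTransGen]
    exact Relation.reflTransGen_closed fun x y hxy ↦ (reachable_iff_reflTransGen x y).mp (h hxy)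
  refine Nat.card_le_card_of_surjective
    (ConnectedComponent.lift H.connectedComponentMk fun x y p _ ↦
      ConnectedComponent.sound (hGH x y p.reachable)) ?_
  rintro ⟨x⟩
  exact ⟨G.connectedComponentMk x, rfl⟩

lemma card_connectedComponent_le_card_connectedComponent_sup_edge_add_one [Finite V] :
    Nat.card G.ConnectedComponent ≤ Nat.card (G ⊔ edge u v).ConnectedComponent + 1 := by
  classical
  let ψ (c : G.ConnectedComponent) : Option (G ⊔ edge u v).ConnectedComponent :=
    if c = G.connectedComponentMk v then none else some (c.map (.ofLE le_sup_left))
  have hψ : ψ.Injective := by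
    intro c₁ c₂ h
    induction c₁, c₂ using ConnectedComponent.ind₂ with | h x y => ?_
    by_cases hx : G.Reachable x v <;> by_cases hy : G.Reachable y v <;>
      simp only [ψ, ConnectedComponent.eq, hx, hy, if_true, if_false, ConnectedComponent.map_mk,
        Option.some.injEq, reduceCtorEq] at h ⊢
    · exact hx.trans hy.symm
    · exact h.of_sup_edge hx hy
  exact (Nat.card_le_card_of_injective ψ hψ).trans_eq Finite.card_option

lemma card_connectedComponent_sup_edge_lt [Finite V] (h : ¬G.Reachable u v) :
    Nat.card (G ⊔ edge u v).ConnectedComponent < Nat.card G.ConnectedComponent := by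
  have := Fintype.ofFinite G.ConnectedComponent
  have := Fintype.ofFinite (G ⊔ edge u v).ConnectedComponent
  simp only [Nat.card_eq_fintype_card]
  refine Fintype.card_lt_of_surjective_not_injective _
    (ConnectedComponent.surjective_map_ofLE le_sup_left) fun hinj ↦ h ?_
  refine ConnectedComponent.exact (@hinj (G.connectedComponentMk u) (G.connectedComponentMk v) ?_)
  exact ConnectedComponent.sound
    (Adj.reachable (.inr ((edge_adj ..).mpr ⟨.inl ⟨rfl, rfl⟩, fun huv : u = v ↦ h (huv ▸ .rfl)⟩)))

lemma fromEdgeSet_insert_mk [DecidableEq V] (s : Finset (Sym2 V)) :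
    fromEdgeSet (↑(insert s(u, v) s) : Set (Sym2 V)) = fromEdgeSet ↑s ⊔ edge u v := by
  rw [coe_insert, Set.insert_eq, fromEdgeSet_union, sup_comm, edge]

lemma card_le_card_add_card_connectedComponent_fromEdgeSet [Finite V] (s : Finset (Sym2 V)) :
    Nat.card V ≤ #s + Nat.card (fromEdgeSet (s : Set (Sym2 V))).ConnectedComponent := by
  classical
  induction s using Finset.induction_on with
  | empty =>
    rw [coe_empty, fromEdgeSet_empty, card_empty, zero_add]
    refine Nat.card_le_card_of_injective (⊥ : SimpleGraph V).connectedComponentMk fun x y hxy ↦ ?_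
    simpa using ConnectedComponent.exact hxy
  | insert e s he ih =>
    induction e with | h u v => ?_
    have := card_connectedComponent_le_card_connectedComponent_sup_edge_add_one
      (G := fromEdgeSet ↑s) (u := u) (v := v)
    rw [fromEdgeSet_insert_mk, card_insert_of_notMem he]
    omega

lemma card_add_card_connectedComponent_fromEdgeSet_le [Finite V] (s : Finset (Sym2 V))
    (hs : ∀ e ∈ s, ¬e.IsDiag) (hac : (fromEdgeSet (s : Set (Sym2 V))).IsAcyclic) :
    #s + Nat.card (fromEdgeSet (s : Set (Sym2 V))).ConnectedComponent ≤ Nat.card V := by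
  classical
  induction s using Finset.induction_on with
  | empty =>
    rw [coe_empty, fromEdgeSet_empty, card_empty, zero_add]
    exact Nat.card_le_card_of_surjective _ fun c ↦ c.exists_rep
  | insert e s he ih =>
    induction e with | h u v => ?_
    rw [fromEdgeSet_insert_mk] at hac ⊢
    have huv : u ≠ v := by simpa using hs _ (mem_insert_self _ _)
    have hnreach : ¬(fromEdgeSet ↑s).Reachable u v := fun h ↦
      (isAcyclic_sup_fromEdgeSet_iff.mp hac).2 h |>.elim huv fun hadj ↦ he (by simpa using hadj.1)
    have := card_connectedComponent_sup_edge_lt hnreach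
    have := ih (fun e he ↦ hs e (mem_insert_of_mem he)) (hac.anti le_sup_left)
    rw [card_insert_of_notMem he]
    omega

end SimpleGraph

theorem forest_connected_edges_bound_general {V : Type*} [Fintype V] (G : SimpleGraph V)
    (S I : Finset (Sym2 V))
    (hI : ↑I ⊆ G.edgeSet)
    (hIac : (SimpleGraph.fromEdgeSet (↑I : Set (Sym2 V))).IsAcyclic) :
    {e ∈ (I : Set (Sym2 V)) |
        ∃ u v : V, e = s(u, v) ∧
          (SimpleGraph.fromEdgeSet (↑S : Set (Sym2 V))).Reachable u v}.ncard ≤ S.card := by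
  classical
  set HS := fromEdgeSet (↑S : Set (Sym2 V))
  set T := I.filter fun e ↦ ∃ u v : V, e = s(u, v) ∧ HS.Reachable u v
  rw [show {e ∈ (I : Set (Sym2 V)) | _} = (T : Set (Sym2 V)) from (coe_filter _ _).symm,
    Set.ncard_coe_finset]
  have hT_reach : ∀ ⦃x y⦄, (fromEdgeSet (↑T : Set (Sym2 V))).Adj x y → HS.Reachable x y := by
    rintro x y ⟨hxy, -⟩
    obtain ⟨u, v, huv, hreach⟩ := (mem_filter.mp hxy).2
    rcases Sym2.eq_iff.mp huv with ⟨rfl, rfl⟩ | ⟨rfl, rfl⟩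
    exacts [hreach, hreach.symm]
  have hT := card_add_card_connectedComponent_fromEdgeSet_le T
    (fun e he ↦ G.not_isDiag_of_mem_edgeSet (hI (mem_filter.mp he).1))
    (hIac.anti (fromEdgeSet_mono (filter_subset _ _)))
  have hS : Nat.card V ≤ #S + Nat.card HS.ConnectedComponent :=
    card_le_card_add_card_connectedComponent_fromEdgeSet S
  have hTS := card_connectedComponent_le_of_adj_imp_reachable hT_reach
  omega

/-- If `S` and `I` are acyclic edge sets (forests) of a finite simple graph `G`, then the
number of edges of `I` whose endpoints lie in the same connected component of the spanning
subgraph `(V(G), S)` is at most `|S|`. -/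
theorem forest_connected_edges_bound {V : Type*} [Fintype V] (G : SimpleGraph V)
    (S I : Finset (Sym2 V))
    (hS : ↑S ⊆ G.edgeSet) (hI : ↑I ⊆ G.edgeSet)
    (hSac : (SimpleGraph.fromEdgeSet (↑S : Set (Sym2 V))).IsAcyclic)
    (hIac : (SimpleGraph.fromEdgeSet (↑I : Set (Sym2 V))).IsAcyclic) :
    {e ∈ (I : Set (Sym2 V)) |
        ∃ u v : V, e = s(u, v) ∧
          (SimpleGraph.fromEdgeSet (↑S : Set (Sym2 V))).Reachable u v}.ncard ≤ S.card :=
  forest_connected_edges_bound_general G S I hI hIac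
end

section
/- Let P be a finite set of points in the Euclidean plane ℝ², let L be a connected simple graph with vertex set P whose edge set contains every pair of distinct points at Euclidean distance at most 1, and let T be a spanning tree of L minimizing the total Euclidean length of its edges. Then for every real Π ≥ 1 and every axis-aligned square of side Π in the plane, the number of edges of T whose Euclidean length lies in the interval (1, Π] and which have at least one endpoint in the square is less than 9(2Π+1)². -/
open Finset SimpleGraph

/-!
Root the tree `T` at a vertex `r`. Deleting an edge `e` of `T` cuts off one of its endpoints from
`r`, the far endpoint of `e`. If two distinct edges longer than `1` had far endpoints `x₁, x₂` at
distance at most `1`, then `x₁x₂` would be an edge of `L` reconnecting `T` minus one of the two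
edges, and the exchange would give a shorter spanning tree. So the far endpoints of the counted
edges are pairwise more than `1` apart; they lie in the square of side `3Q` around the given one,
and a grid of cells of side `1/2` bounds their number by `(⌊6Q⌋ + 1)² < 9(2Q+1)²`.
-/

/-- The Euclidean length of an edge of a graph whose vertices are points of the plane. -/
noncomputable def edgeLen {P : Finset (EuclideanSpace ℝ (Fin 2))}
    (e : Sym2 (↑P : Type)) : ℝ :=
  Sym2.lift ⟨fun (u v : {x // x ∈ P}) => dist u.1 v.1, fun _ _ => dist_comm _ _⟩ e

/-- The total Euclidean length of the edges of a graph on a finite set of planar points. -/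
noncomputable def totalLen {P : Finset (EuclideanSpace ℝ (Fin 2))}
    (T : SimpleGraph (↑P : Type)) : ℝ :=
  ∑ᶠ e ∈ T.edgeSet, edgeLen e

/-- Membership in the closed axis-aligned square with lower-left corner `a` and side `t`. -/
def InSquare (a : EuclideanSpace ℝ (Fin 2)) (t : ℝ) (x : EuclideanSpace ℝ (Fin 2)) : Prop :=
  ∀ i, a i ≤ x i ∧ x i ≤ a i + t

namespace SimpleGraph

variable {V : Type*}

def IsMinSpanningTree (T L : SimpleGraph V) (w : Sym2 V → ℝ) : Prop :=
  T ≤ L ∧ T.IsTree ∧ ∀ T' ≤ L, T'.IsTree → ∑ᶠ e ∈ T.edgeSet, w e ≤ ∑ᶠ e ∈ T'.edgeSet, w e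

section Connected

variable {G : SimpleGraph V}

theorem Connected.reachable_deleteEdges_or (hG : G.Connected) (u v z : V) :
    (G.deleteEdges {s(u, v)}).Reachable z u ∨ (G.deleteEdges {s(u, v)}).Reachable z v := by
  set G' := G.deleteEdges {s(u, v)}
  have hwalk :
      ∀ {x t : V}, G.Walk x t → G'.Reachable x t ∨ G'.Reachable x u ∨ G'.Reachable x v := by
    intro x t p
    induction p with
    | nil => exact .inl .rfl
    | @cons x y t hxy _ ih =>
      by_cases he : s(x, y) = s(u, v)
      · rcases Sym2.eq_iff.mp he with ⟨rfl, -⟩ | ⟨rfl, -⟩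
        exacts [.inr (.inl .rfl), .inr (.inr .rfl)]
      · have hxy' : G'.Adj x y := by simp [G', hxy, he]
        exact ih.imp hxy'.reachable.trans (Or.imp hxy'.reachable.trans hxy'.reachable.trans)
  obtain ⟨p⟩ := hG.preconnected z u
  exact (hwalk p).elim .inl id

theorem Connected.reachable_deleteEdges_or_of_not_reachable (hG : G.Connected) {e : Sym2 V}
    {p q : V} (hpq : ¬ (G.deleteEdges {e}).Reachable p q) (z : V) :
    (G.deleteEdges {e}).Reachable z p ∨ (G.deleteEdges {e}).Reachable z q := by
  induction e with | h u v => ?_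
  rcases hG.reachable_deleteEdges_or u v p with hp | hp <;>
    rcases hG.reachable_deleteEdges_or u v q with hq | hq <;>
    rcases hG.reachable_deleteEdges_or u v z with hz | hz <;>
    first
    | exact absurd (hp.trans hq.symm) hpq
    | exact .inl (hz.trans hp.symm)
    | exact .inr (hz.trans hq.symm)

theorem IsBridge.exists_mem_not_reachable {e : Sym2 V} (he : G.IsBridge e) (r : V) :
    ∃ x ∈ e, ¬ (G.deleteEdges {e}).Reachable r x := by
  induction e with | h u v => ?_
  by_cases hu : (G.deleteEdges {s(u, v)}).Reachable r u
  · exact ⟨v, Sym2.mem_mk_right u v, fun hv => isBridge_iff.mp he (hu.symm.trans hv)⟩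
  · exact ⟨u, Sym2.mem_mk_left u v, hu⟩

theorem Connected.not_reachable_deleteEdges_of_ne (hG : G.Connected) {r x₁ x₂ : V}
    {e₁ e₂ : Sym2 V} (he₂ : e₂ ∈ G.edgeSet) (hne : e₁ ≠ e₂) (hx₁ : x₁ ∈ e₁) (hx₂ : x₂ ∈ e₂)
    (hr₁ : ¬ (G.deleteEdges {e₁}).Reachable r x₁) (hr₂ : ¬ (G.deleteEdges {e₂}).Reachable r x₂) :
    ¬ (G.deleteEdges {e₁}).Reachable x₁ x₂ ∨ ¬ (G.deleteEdges {e₂}).Reachable x₁ x₂ := by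
  classical
  rw [← not_and_or]
  rintro ⟨h₁, h₂⟩
  obtain ⟨z₂, rfl⟩ := Sym2.mem_iff_exists.mp hx₂
  -- A walk from `r` to the near endpoint `z₂` avoiding `e₂` either meets `x₁` or also avoids `e₁`.
  obtain ⟨p⟩ := (hG.reachable_deleteEdges_or x₂ z₂ r).resolve_left hr₂
  by_cases hp : e₁ ∈ p.edges
  · exact hr₂ (.trans ⟨p.takeUntil x₁ (p.mem_support_of_mem_edges hp hx₁)⟩ h₂)
  · have hz₂ : (G.deleteEdges {e₁}).Reachable r z₂ :=
      Reachable.mono (fun a b => by simp +contextual)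
        ⟨p.toDeleteEdges {e₁} fun f hf => by rintro rfl; exact hp hf⟩
    have hadj : (G.deleteEdges {e₁}).Adj z₂ x₂ := by
      simpa [eq_comm, Sym2.eq_swap, hne] using (G.mem_edgeSet.mp he₂).symm
    exact hr₁ ((hz₂.trans hadj.reachable).trans h₁.symm)

end Connected

theorem IsTree.sup_edge_of_not_reachable_deleteEdges {T : SimpleGraph V} (hT : T.IsTree)
    {e : Sym2 V} {p q : V} (hpq : ¬ (T.deleteEdges {e}).Reachable p q) :
    (T.deleteEdges {e} ⊔ edge p q).IsTree := by
  have hne : p ≠ q := by rintro rfl; exact hpq .rfl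
  refine ⟨(connected_iff_exists_forall_reachable _).mpr ⟨p, fun z => ?_⟩,
    (hT.isAcyclic.anti (deleteEdges_le _)).sup_edge_of_not_reachable hpq⟩
  have hle : T.deleteEdges {e} ≤ T.deleteEdges {e} ⊔ edge p q := le_sup_left
  have hpq' : (T.deleteEdges {e} ⊔ edge p q).Reachable p q :=
    Adj.reachable (Or.inr (by simp [edge_adj, hne]))
  rcases hT.connected.reachable_deleteEdges_or_of_not_reachable hpq z with hz | hz
  · exact (hz.mono hle).symm
  · exact hpq'.trans (hz.mono hle).symm

namespace IsMinSpanningTree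

variable [Finite V] {T L : SimpleGraph V} {w : Sym2 V → ℝ}

theorem apply_le_of_not_reachable (hT : T.IsMinSpanningTree L w) {e : Sym2 V}
    (he : e ∈ T.edgeSet) {p q : V} (hpq : ¬ (T.deleteEdges {e}).Reachable p q)
    (hadj : L.Adj p q) : w e ≤ w s(p, q) := by
  obtain ⟨hTL, hTtree, hmin⟩ := hT
  have hne : p ≠ q := by rintro rfl; exact hpq .rfl
  have hpq_new : s(p, q) ∉ T.edgeSet \ {e} := fun h =>
    hpq (Adj.reachable (by simpa using h))
  have hsum_T : ∑ᶠ f ∈ T.edgeSet, w f = w e + ∑ᶠ f ∈ T.edgeSet \ {e}, w f := by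
    rw [← finsum_mem_insert _ (fun h => h.2 rfl) (Set.toFinite _), Set.insert_sdiff_singleton,
      Set.insert_eq_of_mem he]
  have hsum := hmin _ (sup_le ((deleteEdges_le _).trans hTL) ((edge_le_iff L).mpr (.inr hadj)))
    (hTtree.sup_edge_of_not_reachable_deleteEdges hpq)
  rw [edgeSet_sup, edgeSet_deleteEdges, edgeSet_edge_of_ne hne, Set.union_singleton,
    finsum_mem_insert _ hpq_new (Set.toFinite _), hsum_T] at hsum
  linarith

theorem lt_apply_of_not_reachable (hT : T.IsMinSpanningTree L w) {c : ℝ}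
    (hL : ∀ p q, p ≠ q → w s(p, q) ≤ c → L.Adj p q) {r x₁ x₂ : V} {e₁ e₂ : Sym2 V}
    (he₁ : e₁ ∈ T.edgeSet) (he₂ : e₂ ∈ T.edgeSet) (hne : e₁ ≠ e₂) (hw₁ : c < w e₁)
    (hw₂ : c < w e₂) (hx₁ : x₁ ∈ e₁) (hx₂ : x₂ ∈ e₂)
    (hr₁ : ¬ (T.deleteEdges {e₁}).Reachable r x₁) (hr₂ : ¬ (T.deleteEdges {e₂}).Reachable r x₂) :
    c < w s(x₁, x₂) := by
  by_contra! hle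
  rcases hT.2.1.connected.not_reachable_deleteEdges_of_ne he₂ hne hx₁ hx₂ hr₁ hr₂ with h | h
  · have hadj := hL x₁ x₂ (by rintro rfl; exact h .rfl) hle
    linarith [hT.apply_le_of_not_reachable he₁ h hadj]
  · have hadj := hL x₁ x₂ (by rintro rfl; exact h .rfl) hle
    linarith [hT.apply_le_of_not_reachable he₂ h hadj]

end IsMinSpanningTree

end SimpleGraph

theorem dist_le_edgeLen_of_mem {P : Finset (EuclideanSpace ℝ (Fin 2))} {e : Sym2 (↑P : Type)}
    {x y : (↑P : Type)} (hx : x ∈ e) (hy : y ∈ e) : dist x.1 y.1 ≤ edgeLen e := by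
  induction e with | h u v => ?_
  have huv : 0 ≤ dist u.1 v.1 := dist_nonneg
  have hvu : dist v.1 u.1 ≤ dist u.1 v.1 := (dist_comm _ _).le
  rcases Sym2.mem_iff.mp hx with rfl | rfl <;> rcases Sym2.mem_iff.mp hy with rfl | rfl <;>
    simp [edgeLen, huv, hvu]

theorem InSquare.of_dist_le {a x y : EuclideanSpace ℝ (Fin 2)} {t d : ℝ} (hx : InSquare a t x)
    (hxy : dist x y ≤ d) : InSquare (a - WithLp.toLp 2 fun _ => d) (t + 2 * d) y := by
  intro i
  have hi := (PiLp.dist_apply_le x y i).trans hxy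
  rw [Real.dist_eq, abs_le] at hi
  simp only [PiLp.sub_apply]
  constructor <;> linarith [hx i]

theorem Nat.abs_sub_lt_one_of_floor_eq_floor {R : Type*} [Ring R] [LinearOrder R]
    [IsStrictOrderedRing R] [FloorRing R] {a b : R} (ha : 0 ≤ a) (hb : 0 ≤ b)
    (h : ⌊a⌋₊ = ⌊b⌋₊) : |a - b| < 1 :=
  Int.abs_sub_lt_one_of_floor_eq_floor <| by
    rw [← Int.natCast_floor_eq_floor ha, ← Int.natCast_floor_eq_floor hb, h]

theorem ncard_le_of_inSquare_of_one_lt_dist {ι : Type*} {S : Set ι}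
    {f : ι → EuclideanSpace ℝ (Fin 2)} {b : EuclideanSpace ℝ (Fin 2)} {s : ℝ}
    (hS : ∀ i ∈ S, InSquare b s (f i)) (hsep : S.Pairwise fun i j => 1 < dist (f i) (f j)) :
    S.ncard ≤ (⌊2 * s⌋₊ + 1) ^ 2 := by
  -- A cell of side `1/2` has diameter `√2/2 < 1`, so it holds at most one point `f i`.
  let cell (x : EuclideanSpace ℝ (Fin 2)) : ℕ × ℕ := (⌊2 * (x 0 - b 0)⌋₊, ⌊2 * (x 1 - b 1)⌋₊)
  let grid := range (⌊2 * s⌋₊ + 1) ×ˢ range (⌊2 * s⌋₊ + 1)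
  have hmaps : ∀ i ∈ S, cell (f i) ∈ (grid : Set (ℕ × ℕ)) := by
    intro i hi
    have h0 := hS i hi 0
    have h1 := hS i hi 1
    simp only [grid, cell, coe_product, coe_range, Set.mem_prod, Set.mem_Iio, Nat.lt_succ_iff]
    constructor <;> apply Nat.floor_le_floor <;> linarith
  have hinj : S.InjOn (cell ∘ f) := by
    intro i hi j hj hij
    by_contra hne
    have hclose : ∀ k, |f i k - f j k| < 1 / 2 := by
      intro k
      have hk : ⌊2 * (f i k - b k)⌋₊ = ⌊2 * (f j k - b k)⌋₊ := by
        fin_cases k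
        exacts [congrArg Prod.fst hij, congrArg Prod.snd hij]
      have := Nat.abs_sub_lt_one_of_floor_eq_floor (by linarith [(hS i hi k).1])
        (by linarith [(hS j hj k).1]) hk
      rw [← mul_sub, sub_sub_sub_cancel_right, abs_mul, abs_two] at this
      linarith
    have hdist : dist (f i) (f j) < 1 := by
      have h0 := abs_lt.mp (hclose 0)
      have h1 := abs_lt.mp (hclose 1)
      rw [EuclideanSpace.dist_eq, Real.sqrt_lt' one_pos, Fin.sum_univ_two]
      simp only [Real.dist_eq, sq_abs]
      nlinarith
    exact (hsep hi hj hne).not_gt hdist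
  calc S.ncard ≤ (grid : Set (ℕ × ℕ)).ncard := Set.ncard_le_ncard_of_injOn _ hmaps hinj
    _ = (⌊2 * s⌋₊ + 1) ^ 2 := by simp [grid, sq]

theorem mst_medium_links_sparse_general (P : Finset (EuclideanSpace ℝ (Fin 2)))
    (L : SimpleGraph (↑P : Type))
    (hfull : ∀ u v : (↑P : Type), u ≠ v → dist u.1 v.1 ≤ 1 → L.Adj u v)
    (T : SimpleGraph (↑P : Type)) (hTle : T ≤ L) (hT : T.IsTree)
    (hmin : ∀ T' : SimpleGraph (↑P : Type), T' ≤ L → T'.IsTree → totalLen T ≤ totalLen T')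
    (Q : ℝ) (hQ : 1 ≤ Q) (a : EuclideanSpace ℝ (Fin 2)) :
    ({e ∈ T.edgeSet | 1 < edgeLen e ∧ edgeLen e ≤ Q ∧
        ∃ u v : (↑P : Type), e = s(u, v) ∧ (InSquare a Q u.1 ∨ InSquare a Q v.1)}.ncard : ℝ)
      < 9 * (2 * Q + 1) ^ 2 := by
  set E := {e ∈ T.edgeSet | 1 < edgeLen e ∧ edgeLen e ≤ Q ∧
    ∃ u v : (↑P : Type), e = s(u, v) ∧ (InSquare a Q u.1 ∨ InSquare a Q v.1)}
  have hMST : T.IsMinSpanningTree L edgeLen := ⟨hTle, hT, hmin⟩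
  have : Nonempty (↑P : Type) := hT.connected.nonempty
  obtain ⟨r⟩ := id this
  have hfar : ∀ e ∈ E, ∃ x ∈ e, ¬ (T.deleteEdges {e}).Reachable r x ∧
      InSquare (a - WithLp.toLp 2 fun _ => Q) (Q + 2 * Q) x.1 := by
    rintro e ⟨he, -, hlen, u, v, rfl, hsq⟩
    obtain ⟨x, hx, hrx⟩ :=
      (isAcyclic_iff_forall_isBridge.mp hT.isAcyclic he).exists_mem_not_reachable r
    obtain ⟨y, hy, hya⟩ : ∃ y ∈ s(u, v), InSquare a Q y.1 :=
      hsq.elim (⟨u, Sym2.mem_mk_left u v, ·⟩) (⟨v, Sym2.mem_mk_right u v, ·⟩)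
    exact ⟨x, hx, hrx, hya.of_dist_le ((dist_le_edgeLen_of_mem hy hx).trans hlen)⟩
  choose! far hfar_mem hfar_cut hfar_sq using hfar
  have hsep : E.Pairwise fun e₁ e₂ => 1 < dist (far e₁).1 (far e₂).1 :=
    fun e₁ he₁ e₂ he₂ hne => hMST.lt_apply_of_not_reachable hfull he₁.1 he₂.1 hne he₁.2.1
      he₂.2.1 (hfar_mem e₁ he₁) (hfar_mem e₂ he₂) (hfar_cut e₁ he₁) (hfar_cut e₂ he₂)
  have hcount := ncard_le_of_inSquare_of_one_lt_dist hfar_sq hsep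
  have hfloor : (⌊2 * (Q + 2 * Q)⌋₊ : ℝ) ≤ 6 * Q :=
    (Nat.floor_le (by linarith)).trans_eq (by ring)
  calc (E.ncard : ℝ) ≤ (⌊2 * (Q + 2 * Q)⌋₊ + 1) ^ 2 := by exact_mod_cast hcount
    _ ≤ (6 * Q + 1) ^ 2 := by gcongr
    _ < 9 * (2 * Q + 1) ^ 2 := by nlinarith

/-- If `L` contains all pairs of distinct points at distance at most `1` and `T` is a minimum
spanning tree of `L`, then for every `Q ≥ 1`, every axis-aligned square of side `Q` hits fewer
than `9(2Q+1)²` edges of `T` of length in `(1, Q]`. -/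
theorem mst_medium_links_sparse (P : Finset (EuclideanSpace ℝ (Fin 2)))
    (L : SimpleGraph (↑P : Type)) (hL : L.Connected)
    (hfull : ∀ u v : (↑P : Type), u ≠ v → dist u.1 v.1 ≤ 1 → L.Adj u v)
    (T : SimpleGraph (↑P : Type)) (hTle : T ≤ L) (hT : T.IsTree)
    (hmin : ∀ T' : SimpleGraph (↑P : Type), T' ≤ L → T'.IsTree → totalLen T ≤ totalLen T')
    (Q : ℝ) (hQ : 1 ≤ Q) (a : EuclideanSpace ℝ (Fin 2)) :
    ({e ∈ T.edgeSet | 1 < edgeLen e ∧ edgeLen e ≤ Q ∧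
        ∃ u v : (↑P : Type), e = s(u, v) ∧ (InSquare a Q u.1 ∨ InSquare a Q v.1)}.ncard : ℝ)
      < 9 * (2 * Q + 1) ^ 2 :=
  mst_medium_links_sparse_general P L hfull T hTle hT hmin Q hQ a
end

section
/- Let D₀ be a closed disk of radius r > 0 in the Euclidean plane ℝ², and let F be a finite family of closed disks, each of radius at least r and each having nonempty intersection with D₀. Then F can be partitioned into at most 6 subfamilies such that within each subfamily every two disks have nonempty intersection. -/
/-!
A disk of radius `ρ ≥ r` meeting `D₀ = closedBall c₀ r` has its center within `ρ + r` of `c₀`.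
Cut the plane into six sectors of angle `π / 3` at `c₀`. Two centers `x, y` in the same sector
subtend an angle of at most `π / 3` at `c₀`, so by the law of cosines `|x - y|` is at most the
larger of `|x - c₀|` and `|y - c₀|`, say `|x - c₀| ≤ ρ + r ≤ ρ + ρ'`: the two disks meet.
-/

open Metric Real InnerProductGeometry

theorem norm_sub_le_max_of_angle_le {V : Type*} [NormedAddCommGroup V] [InnerProductSpace ℝ V]
    {x y : V} (h : angle x y ≤ π / 3) : ‖x - y‖ ≤ max ‖x‖ ‖y‖ := by
  have hcos : 1 / 2 ≤ cos (angle x y) := by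
    rw [← cos_pi_div_three]
    exact cos_le_cos_of_nonneg_of_le_pi (angle_nonneg x y) (by linarith [pi_pos]) h
  have hlaw := norm_sub_sq_eq_norm_sq_add_norm_sq_sub_two_mul_norm_mul_norm_mul_cos_angle x y
  have hx := norm_nonneg x
  have hy := norm_nonneg y
  have hxy : ‖x - y‖ ^ 2 ≤ ‖x‖ ^ 2 + ‖y‖ ^ 2 - ‖x‖ * ‖y‖ := by
    rw [sq, sq, sq, hlaw]; nlinarith [mul_nonneg hx hy]
  rw [← pow_le_pow_iff_left₀ (norm_nonneg _) (le_max_of_le_left hx) two_ne_zero]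
  rcases le_total ‖x‖ ‖y‖ with hle | hle
  · rw [max_eq_right hle]; nlinarith
  · rw [max_eq_left hle]; nlinarith

namespace Complex

theorem arg_div_eq_sub {z w : ℂ} (hz : z ≠ 0) (hw : w ≠ 0) (h : |z.arg - w.arg| < π) :
    (z / w).arg = z.arg - w.arg := by
  rw [← arg_coe_angle_toReal_eq_arg, arg_div_coe_angle hz hw, ← Real.Angle.coe_sub,
    Real.Angle.toReal_coe_eq_self_iff]
  exact ⟨(abs_lt.1 h).1, (abs_lt.1 h).2.le⟩

theorem norm_sub_le_max_of_abs_arg_sub_le {z w : ℂ} (h : |z.arg - w.arg| ≤ π / 3) :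
    ‖z - w‖ ≤ max ‖z‖ ‖w‖ := by
  rcases eq_or_ne z 0 with rfl | hz
  · simp
  rcases eq_or_ne w 0 with rfl | hw
  · simp
  apply norm_sub_le_max_of_angle_le
  rwa [angle_eq_abs_arg hz hw, arg_div_eq_sub hz hw (by linarith [pi_pos])]

/-- Sextant `k` consists of the `z` with `π - (k + 1) π / 3 < arg z ≤ π - k π / 3`. -/
noncomputable def sextant (z : ℂ) : Fin 6 :=
  ⟨⌊3 * (π - z.arg) / π⌋.toNat, by
    have : ⌊3 * (π - z.arg) / π⌋ < 6 := by
      rw [Int.floor_lt, div_lt_iff₀ pi_pos]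
      push_cast
      linarith [neg_pi_lt_arg z]
    omega⟩

theorem abs_arg_sub_lt_of_sextant_eq {z w : ℂ} (h : sextant z = sextant w) :
    |z.arg - w.arg| < π / 3 := by
  have hnonneg : ∀ u : ℂ, 0 ≤ ⌊3 * (π - u.arg) / π⌋ := fun u =>
    Int.floor_nonneg.2 (div_nonneg (by linarith [arg_le_pi u]) pi_pos.le)
  have hfloor : ⌊3 * (π - z.arg) / π⌋ = ⌊3 * (π - w.arg) / π⌋ := by
    have := congrArg Fin.val h
    simp only [sextant] at this
    have := hnonneg z
    have := hnonneg w
    omega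
  have hlt := Int.abs_sub_lt_one_of_floor_eq_floor hfloor
  rw [← sub_div, abs_div, abs_of_pos pi_pos, div_lt_one pi_pos,
    show 3 * (π - z.arg) - 3 * (π - w.arg) = 3 * (w.arg - z.arg) by ring, abs_mul,
    abs_of_pos three_pos, abs_sub_comm] at hlt
  linarith

end Complex

theorem closedBall_inter_nonempty_of_dist_le_max {E : Type*} [NormedAddCommGroup E]
    [NormedSpace ℝ E] {c x y : E} {r a b : ℝ} (ha : r ≤ a) (hb : r ≤ b)
    (hx : (closedBall x a ∩ closedBall c r).Nonempty)
    (hy : (closedBall y b ∩ closedBall c r).Nonempty)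
    (hxy : dist x y ≤ max (dist x c) (dist y c)) :
    (closedBall x a ∩ closedBall y b).Nonempty := by
  have hxc := dist_le_add_of_nonempty_closedBall_inter_closedBall hx
  have hyc := dist_le_add_of_nonempty_closedBall_inter_closedBall hy
  have ha₀ : 0 ≤ a := nonempty_closedBall.1 (hx.mono Set.inter_subset_left)
  have hb₀ : 0 ≤ b := nonempty_closedBall.1 (hy.mono Set.inter_subset_left)
  rw [← Set.not_disjoint_iff_nonempty_inter, disjoint_closedBall_closedBall_iff ha₀ hb₀, not_lt]
  exact hxy.trans (max_le (by linarith) (by linarith))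

theorem disks_six_cliques_general (c₀ : EuclideanSpace ℝ (Fin 2)) (r : ℝ)
    (F : Finset (EuclideanSpace ℝ (Fin 2) × ℝ))
    (hrad : ∀ D ∈ F, r ≤ D.2)
    (hint : ∀ D ∈ F, (closedBall D.1 D.2 ∩ closedBall c₀ r).Nonempty) :
    ∃ f : EuclideanSpace ℝ (Fin 2) × ℝ → Fin 6,
      ∀ D ∈ F, ∀ D' ∈ F, f D = f D' →
        (closedBall D.1 D.2 ∩ closedBall D'.1 D'.2).Nonempty := by
  let e := Complex.orthonormalBasisOneI.repr.symm
  refine ⟨fun D => Complex.sextant (e (D.1 - c₀)), fun D hD D' hD' hsec => ?_⟩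
  refine closedBall_inter_nonempty_of_dist_le_max (hrad D hD) (hrad D' hD') (hint D hD)
    (hint D' hD') ?_
  have := Complex.norm_sub_le_max_of_abs_arg_sub_le (Complex.abs_arg_sub_lt_of_sextant_eq hsec).le
  simpa only [← map_sub, LinearIsometryEquiv.norm_map, sub_sub_sub_cancel_right,
    ← dist_eq_norm] using this

/-- A finite family of closed disks in the plane, each of radius at least `r` and each meeting
a fixed closed disk of radius `r`, can be partitioned into at most `6` subfamilies in which any
two disks intersect. -/
theorem disks_six_cliques (c₀ : EuclideanSpace ℝ (Fin 2)) (r : ℝ) (hr : 0 < r)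
    (F : Finset (EuclideanSpace ℝ (Fin 2) × ℝ))
    (hrad : ∀ D ∈ F, r ≤ D.2)
    (hint : ∀ D ∈ F, (closedBall D.1 D.2 ∩ closedBall c₀ r).Nonempty) :
    ∃ f : EuclideanSpace ℝ (Fin 2) × ℝ → Fin 6,
      ∀ D ∈ F, ∀ D' ∈ F, f D = f D' →
        (closedBall D.1 D.2 ∩ closedBall D'.1 D'.2).Nonempty :=
  disks_six_cliques_general c₀ r F hrad hint
end

section
/- Let ℓ > 0 and let s_u, r_u, s_v, r_v be points of the Euclidean plane ℝ² with dist(s_u, r_u) ≥ ℓ and dist(s_v, r_v) ≥ ℓ. Suppose there exist x_u ∈ {s_u, r_u} and x_v ∈ {s_v, r_v} with dist(x_u, x_v) ≤ √2·ℓ. Then dist(s_u, r_v) ≤ (1+√2)·dist(s_v, r_v) or dist(s_v, r_u) ≤ (1+√2)·dist(s_u, r_u). -/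
/-- If two links in the plane both have length at least `ℓ` and some endpoint of one is within
distance `√2·ℓ` of some endpoint of the other, then `dist(s_u, r_v) ≤ (1+√2)·dist(s_v, r_v)` or
`dist(s_v, r_u) ≤ (1+√2)·dist(s_u, r_u)`. -/
theorem close_links_affect (ℓ : ℝ) (hℓ : 0 < ℓ)
    (su ru sv rv : EuclideanSpace ℝ (Fin 2))
    (hu : ℓ ≤ dist su ru) (hv : ℓ ≤ dist sv rv)
    (hclose : ∃ xu ∈ ({su, ru} : Set (EuclideanSpace ℝ (Fin 2))),
      ∃ xv ∈ ({sv, rv} : Set (EuclideanSpace ℝ (Fin 2))),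
        dist xu xv ≤ Real.sqrt 2 * ℓ) :
    dist su rv ≤ (1 + Real.sqrt 2) * dist sv rv ∨
      dist sv ru ≤ (1 + Real.sqrt 2) * dist su ru := by
  obtain ⟨xu, hxu, xv, hxv, h⟩ := hclose
  have hs2 : (0:ℝ) ≤ Real.sqrt 2 := Real.sqrt_nonneg 2
  have hv2 : Real.sqrt 2 * ℓ ≤ Real.sqrt 2 * dist sv rv :=
    mul_le_mul_of_nonneg_left hv hs2
  have hu2 : Real.sqrt 2 * ℓ ≤ Real.sqrt 2 * dist su ru :=
    mul_le_mul_of_nonneg_left hu hs2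
  simp only [Set.mem_insert_iff, Set.mem_singleton_iff] at hxu hxv
  rcases hxu with h1 | h1 <;> rcases hxv with h2 | h2 <;> rw [h1, h2] at h
  · -- xu = su, xv = sv
    left
    calc dist su rv ≤ dist su sv + dist sv rv := dist_triangle _ _ _
      _ ≤ Real.sqrt 2 * ℓ + dist sv rv := by linarith
      _ ≤ (1 + Real.sqrt 2) * dist sv rv := by nlinarith
  · -- xu = su, xv = rv
    left
    calc dist su rv ≤ Real.sqrt 2 * ℓ := h
      _ ≤ (1 + Real.sqrt 2) * dist sv rv := by nlinarith [dist_nonneg (x := sv) (y := rv)]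
  · -- xu = ru, xv = sv
    right
    rw [dist_comm sv ru]
    calc dist ru sv ≤ Real.sqrt 2 * ℓ := h
      _ ≤ (1 + Real.sqrt 2) * dist su ru := by nlinarith [dist_nonneg (x := su) (y := ru)]
  · -- xu = ru, xv = rv
    rcases le_total (dist su ru) (dist sv rv) with hle | hle
    · left
      calc dist su rv ≤ dist su ru + dist ru rv := dist_triangle _ _ _
        _ ≤ dist sv rv + Real.sqrt 2 * ℓ := by linarith
        _ ≤ (1 + Real.sqrt 2) * dist sv rv := by nlinarith
    · right
      calc dist sv ru ≤ dist sv rv + dist rv ru := dist_triangle _ _ _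
        _ ≤ dist su ru + Real.sqrt 2 * ℓ := by rw [dist_comm rv ru]; linarith
        _ ≤ (1 + Real.sqrt 2) * dist su ru := by nlinarith
end

section
/- Let α > 0 and β > (1+√2)^α, let ℓ > 0, and let X be an axis-aligned square of side ℓ in ℝ². Then every finite set F of links that is β-feasible under uniform power with zero noise contains at most one link of length at least ℓ having an endpoint in X. Consequently, if L is a finite set of links each of length at least ℓ and each having an endpoint in X, then any partition of L into sets that are β-feasible under uniform power with zero noise has at least |L| parts. -/
/-!
If links `(s, r) ≠ (s', r')` are both in a `β`-feasible set, the interference term of the other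
sender alone gives `β · d(s', r)^(-α) ≤ d(s, r)^(-α)`, so `β > c^α` with `c = 1 + √2` forces
`d(s', r) > c · d(s, r)`, and symmetrically `d(s, r') > c · d(s', r')`. If both links have length
at least `ℓ` and each has an endpoint in a square of side `ℓ` (diameter `√2 ℓ = (c - 1) ℓ`), the
triangle inequality through those two endpoints contradicts one of these bounds. Hence every
feasible part of `L` holds at most one link, and there are at least `|L|` parts.
-/

open Finset
open scoped Classical ENNReal

/-- A finite set of links (sender–receiver pairs in the plane) is `β`-feasible under uniform
power with zero noise, for path-loss exponent `α`: for every link `(s,r)` in the set,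
`dist(s,r)⁻ᵅ ≥ β · Σ_{(s',r') ≠ (s,r)} dist(s',r)⁻ᵅ` (computed in `ℝ≥0∞`, so that a zero
distance correctly yields infinite interference). -/
def UniformFeasible (α β : ℝ)
    (F : Finset (EuclideanSpace ℝ (Fin 2) × EuclideanSpace ℝ (Fin 2))) : Prop :=
  ∀ l ∈ F, ENNReal.ofReal β *
      ∑ l' ∈ F.erase l, ENNReal.ofReal (dist l'.1 l.2) ^ (-α) ≤
    ENNReal.ofReal (dist l.1 l.2) ^ (-α)

local notation "ℝ²" => EuclideanSpace ℝ (Fin 2)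

lemma mul_lt_of_mul_rpow_neg_le {α β c d D : ℝ} (hα : 0 < α) (hc : 0 < c) (hcβ : c ^ α < β)
    (hd : 0 < d) (hD : 0 < D) (h : β * D ^ (-α) ≤ d ^ (-α)) : c * d < D := by
  have hβd : β * d ^ α ≤ D ^ α := by
    rwa [Real.rpow_neg hD.le, Real.rpow_neg hd.le, ← div_eq_mul_inv,
      div_le_iff₀ (by positivity), ← div_eq_inv_mul, le_div_iff₀ (by positivity)] at h
  have : (c * d) ^ α < D ^ α := by
    rw [Real.mul_rpow hc.le hd.le]
    exact (mul_lt_mul_of_pos_right hcβ (by positivity)).trans_le hβd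
  exact (Real.rpow_lt_rpow_iff (by positivity) hD.le hα).1 this

lemma mul_lt_of_ofReal_mul_rpow_neg_le {α β c d D : ℝ} (hα : 0 < α) (hc : 0 < c)
    (hcβ : c ^ α < β) (hd : 0 < d) (hD : 0 ≤ D)
    (h : ENNReal.ofReal β * ENNReal.ofReal D ^ (-α) ≤ ENNReal.ofReal d ^ (-α)) :
    c * d < D := by
  have hβ : 0 < β := (Real.rpow_pos_of_pos hc α).trans hcβ
  rw [ENNReal.ofReal_rpow_of_pos hd] at h
  rcases hD.eq_or_lt with rfl | hD
  · rw [ENNReal.ofReal_zero, ENNReal.zero_rpow_of_neg (neg_neg_of_pos hα),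
      ENNReal.mul_top (by simpa using hβ), top_le_iff] at h
    exact absurd h ENNReal.ofReal_ne_top
  · rw [ENNReal.ofReal_rpow_of_pos hD, ← ENNReal.ofReal_mul hβ.le,
      ENNReal.ofReal_le_ofReal_iff (by positivity)] at h
    exact mul_lt_of_mul_rpow_neg_le hα hc hcβ hd hD h

lemma UniformFeasible.mul_dist_lt {α β c : ℝ} {F : Finset (ℝ² × ℝ²)}
    (hF : UniformFeasible α β F) (hα : 0 < α) (hc : 0 < c) (hcβ : c ^ α < β)
    {l l' : ℝ² × ℝ²} (hl : l ∈ F) (hl' : l' ∈ F) (hne : l' ≠ l) (hl_ne : l.1 ≠ l.2) : c * dist l.1 l.2 < dist l'.1 l.2 := by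
  refine mul_lt_of_ofReal_mul_rpow_neg_le hα hc hcβ (dist_pos.2 hl_ne) dist_nonneg ?_
  have hterm : ENNReal.ofReal (dist l'.1 l.2) ^ (-α) ≤
      ∑ x ∈ F.erase l, ENNReal.ofReal (dist x.1 l.2) ^ (-α) :=
    single_le_sum_of_canonicallyOrdered (M := ℝ≥0∞) (mem_erase.2 ⟨hne, hl'⟩)
  exact (mul_le_mul_right hterm _).trans (hF l hl)

lemma dist_le_mul_or_dist_le_mul {X : Type*} [PseudoMetricSpace X] {s r s' r' p p' : X}
    {c ℓ : ℝ} (hc : 1 ≤ c) (hℓ : ℓ ≤ dist s r) (hℓ' : ℓ ≤ dist s' r')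
    (hp : p = s ∨ p = r) (hp' : p' = s' ∨ p' = r') (hpp' : dist p p' ≤ (c - 1) * ℓ) :
    dist s' r ≤ c * dist s r ∨ dist s r' ≤ c * dist s' r' := by
  have h₁ : (c - 1) * ℓ ≤ (c - 1) * dist s r := by gcongr
  have h₂ : (c - 1) * ℓ ≤ (c - 1) * dist s' r' := by gcongr
  have := dist_nonneg (x := s) (y := r)
  have := dist_nonneg (x := s') (y := r')
  by_contra! h
  rcases hp with rfl | rfl <;> rcases hp' with rfl | rfl
  · linarith [dist_triangle p' p r, dist_comm p' p]
  · linarith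
  · linarith [dist_comm p' p]
  · linarith [dist_triangle s' p' p, dist_triangle s p p', dist_comm p p']

def InCube {ι : Type*} (a : EuclideanSpace ℝ ι) (ℓ : ℝ) (p : EuclideanSpace ℝ ι) : Prop :=
  ∀ i, a i ≤ p i ∧ p i ≤ a i + ℓ

lemma EuclideanSpace.dist_le_sqrt_card_mul {ι : Type*} [Fintype ι] {p q : EuclideanSpace ℝ ι}
    {ℓ : ℝ} (hℓ : 0 ≤ ℓ) (h : ∀ i, |p i - q i| ≤ ℓ) : dist p q ≤ √(Fintype.card ι) * ℓ := by
  rw [EuclideanSpace.dist_eq, ← Real.sqrt_sq hℓ, ← Real.sqrt_mul (Nat.cast_nonneg _)]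
  gcongr
  calc ∑ i, dist (p i) (q i) ^ 2 ≤ ∑ _i : ι, ℓ ^ 2 := by
        gcongr with i
        exact h i
    _ = Fintype.card ι * ℓ ^ 2 := by simp

lemma InCube.dist_le {ι : Type*} [Fintype ι] {a p q : EuclideanSpace ℝ ι} {ℓ : ℝ} (hℓ : 0 ≤ ℓ)
    (hp : InCube a ℓ p) (hq : InCube a ℓ q) : dist p q ≤ √(Fintype.card ι) * ℓ :=
  EuclideanSpace.dist_le_sqrt_card_mul hℓ fun i =>
    abs_sub_le_iff.2 ⟨by linarith [hp i, hq i], by linarith [hp i, hq i]⟩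

theorem UniformFeasible.eq_of_long_of_inCube {α β ℓ : ℝ} {a : ℝ²} {F : Finset (ℝ² × ℝ²)}
    (hα : 0 < α) (hβ : (1 + √2) ^ α < β) (hℓ : 0 ≤ ℓ)
    (hF : UniformFeasible α β F) (hF_ne : ∀ l ∈ F, l.1 ≠ l.2) {l l' : ℝ² × ℝ²}
    (hl : l ∈ F ∧ ℓ ≤ dist l.1 l.2 ∧ (InCube a ℓ l.1 ∨ InCube a ℓ l.2))
    (hl' : l' ∈ F ∧ ℓ ≤ dist l'.1 l'.2 ∧ (InCube a ℓ l'.1 ∨ InCube a ℓ l'.2)) : l = l' := by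
  have endpoint : ∀ l : ℝ² × ℝ²,
      InCube a ℓ l.1 ∨ InCube a ℓ l.2 → ∃ p, (p = l.1 ∨ p = l.2) ∧ InCube a ℓ p :=
    fun l h => h.elim (fun h => ⟨_, .inl rfl, h⟩) (fun h => ⟨_, .inr rfl, h⟩)
  by_contra hne
  obtain ⟨hlF, hlen, hl_sq⟩ := hl
  obtain ⟨hl'F, hlen', hl'_sq⟩ := hl'
  obtain ⟨p, hp, hp_sq⟩ := endpoint l hl_sq
  obtain ⟨p', hp', hp'_sq⟩ := endpoint l' hl'_sq
  have hc : 1 ≤ 1 + √2 := le_add_of_nonneg_right (Real.sqrt_nonneg 2)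
  have hpp' : dist p p' ≤ (1 + √2 - 1) * ℓ := by
    simpa using hp_sq.dist_le hℓ hp'_sq
  rcases dist_le_mul_or_dist_le_mul hc hlen hlen' hp hp' hpp' with h | h
  · exact h.not_gt (hF.mul_dist_lt hα (by positivity) hβ hlF hl'F (Ne.symm hne) (hF_ne l hlF))
  · exact h.not_gt (hF.mul_dist_lt hα (by positivity) hβ hl'F hlF hne (hF_ne l' hl'F))

theorem card_le_card_of_forall_card_le_one {ι : Type*} {L : Finset ι}
    {parts : Finset (Finset ι)} (hcov : ∀ l ∈ L, ∃ p ∈ parts, l ∈ p)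
    (hparts : ∀ p ∈ parts, p.card ≤ 1) : L.card ≤ parts.card :=
  calc L.card ≤ (parts.biUnion id).card :=
        card_le_card fun l hl => mem_biUnion.2 (hcov l hl)
    _ ≤ parts.card * 1 := card_biUnion_le_card_mul _ _ _ hparts
    _ = parts.card := mul_one _

/-- For `β > (1+√2)^α`: any `β`-feasible (uniform power, zero noise) set contains at most one
link of length at least `ℓ` with an endpoint in a given square of side `ℓ`; consequently, any
partition into `β`-feasible sets of a set `L` of such links has at least `|L|` parts. -/
theorem dense_links_need_many_slots (α β : ℝ) (hα : 0 < α)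
    (hβ : (1 + Real.sqrt 2) ^ α < β) (ℓ : ℝ) (hℓ : 0 < ℓ)
    (a : EuclideanSpace ℝ (Fin 2)) :
    (∀ F : Finset (EuclideanSpace ℝ (Fin 2) × EuclideanSpace ℝ (Fin 2)),
      (∀ l ∈ F, l.1 ≠ l.2) → UniformFeasible α β F →
      (F.filter (fun l => ℓ ≤ dist l.1 l.2 ∧
        ((∀ i, a i ≤ l.1 i ∧ l.1 i ≤ a i + ℓ) ∨
         (∀ i, a i ≤ l.2 i ∧ l.2 i ≤ a i + ℓ)))).card ≤ 1) ∧
    ∀ L : Finset (EuclideanSpace ℝ (Fin 2) × EuclideanSpace ℝ (Fin 2)),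
      (∀ l ∈ L, l.1 ≠ l.2 ∧ ℓ ≤ dist l.1 l.2 ∧
        ((∀ i, a i ≤ l.1 i ∧ l.1 i ≤ a i + ℓ) ∨
         (∀ i, a i ≤ l.2 i ∧ l.2 i ≤ a i + ℓ))) →
      ∀ parts : Finset (Finset (EuclideanSpace ℝ (Fin 2) × EuclideanSpace ℝ (Fin 2))),
        (∀ p ∈ parts, UniformFeasible α β p) →
        (∀ p ∈ parts, p ⊆ L) →
        (∀ l ∈ L, ∃ p ∈ parts, l ∈ p) →
        (∀ p ∈ parts, ∀ q ∈ parts, p ≠ q → Disjoint p q) →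
        L.card ≤ parts.card := by
  refine ⟨fun F hF_ne hF => card_le_one.2 fun l hl l' hl' =>
    hF.eq_of_long_of_inCube hα hβ hℓ.le hF_ne (mem_filter.1 hl) (mem_filter.1 hl'), ?_⟩
  intro L hL parts hparts_feas hparts_sub hcov _
  refine card_le_card_of_forall_card_le_one hcov fun p hp => card_le_one.2 fun l hl l' hl' => ?_
  have hpL : ∀ l ∈ p, _ := fun l hl => hL l (hparts_sub p hp hl)
  exact (hparts_feas p hp).eq_of_long_of_inCube hα hβ hℓ.le (fun l hl => (hpL l hl).1)
    ⟨hl, (hpL l hl).2⟩ ⟨hl', (hpL l' hl').2⟩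
end

section
/- For every α > 2 and every β > 0 there exists a constant c > 0 (depending only on α and β) with the following property: for every ℓ > 0 and every finite set F of links in ℝ², if every link in F has length at most ℓ and for every two distinct links in F the Euclidean distance between every endpoint of one and every endpoint of the other exceeds c·ℓ, then F is β-feasible under uniform power with zero noise. -/
open Finset
open scoped Classical ENNReal

open Metric MeasureTheory in
lemma packing_card {ι : Type*} (S : Finset ι) (f : ι → EuclideanSpace ℝ (Fin 2))
    (x : EuclideanSpace ℝ (Fin 2)) {ε R : ℝ} (hε : 0 < ε)
    (hsep : ∀ a ∈ S, ∀ b ∈ S, a ≠ b → ε < dist (f a) (f b))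
    (hin : ∀ a ∈ S, dist (f a) x ≤ R) :
    (S.card : ℝ) * (ε / 2) ^ 2 ≤ (R + ε / 2) ^ 2 := by
  rcases S.eq_empty_or_nonempty with rfl | ⟨a0, ha0⟩
  · simpa using sq_nonneg (R + ε / 2)
  have hR : 0 ≤ R := le_trans dist_nonneg (hin a0 ha0)
  have hε2 : 0 < ε / 2 := by linarith
  set u := volume (ball (0 : EuclideanSpace ℝ (Fin 2)) 1) with hu
  have hu0 : u ≠ 0 := (measure_ball_pos volume 0 one_pos).ne'
  have hut : u ≠ ⊤ := measure_ball_lt_top.ne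
  have hrank : Module.finrank ℝ (EuclideanSpace ℝ (Fin 2)) = 2 := by simp
  have hvol : ∀ a : ι, volume (ball (f a) (ε / 2)) = ENNReal.ofReal ((ε / 2) ^ 2) * u := by
    intro a
    rw [Measure.addHaar_ball_of_pos volume (f a) hε2, hrank]
  have hdisj : (S : Set ι).PairwiseDisjoint fun a => ball (f a) (ε / 2) := by
    intro a ha b hb hab
    exact ball_disjoint_ball (by linarith [hsep a ha b hb hab])
  have hmeas : volume (⋃ a ∈ S, ball (f a) (ε / 2))
      = (S.card : ℝ≥0∞) * (ENNReal.ofReal ((ε / 2) ^ 2) * u) := by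
    rw [measure_biUnion_finset hdisj fun a _ => measurableSet_ball]
    simp [hvol, Finset.sum_const, nsmul_eq_mul]
  have hsub : (⋃ a ∈ S, ball (f a) (ε / 2)) ⊆ ball x (R + ε / 2) := by
    intro y hy
    simp only [Set.mem_iUnion] at hy
    obtain ⟨a, ha, hya⟩ := hy
    have := hin a ha
    calc dist y x ≤ dist y (f a) + dist (f a) x := dist_triangle _ _ _
      _ < R + ε / 2 := by rw [mem_ball] at hya; linarith
  have hle : (S.card : ℝ≥0∞) * (ENNReal.ofReal ((ε / 2) ^ 2) * u)
      ≤ ENNReal.ofReal ((R + ε / 2) ^ 2) * u := by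
    rw [← hmeas]
    calc volume (⋃ a ∈ S, ball (f a) (ε / 2)) ≤ volume (ball x (R + ε / 2)) :=
          measure_mono hsub
      _ = ENNReal.ofReal ((R + ε / 2) ^ 2) * u := by
          rw [Measure.addHaar_ball_of_pos volume x (by linarith : (0:ℝ) < R + ε / 2), hrank]
  rw [← mul_assoc] at hle
  have hle2 : (S.card : ℝ≥0∞) * ENNReal.ofReal ((ε / 2) ^ 2)
      ≤ ENNReal.ofReal ((R + ε / 2) ^ 2) :=
    (ENNReal.mul_le_mul_iff_left hu0 hut).mp hle
  rw [show (S.card : ℝ≥0∞) = ENNReal.ofReal (S.card : ℝ) by simp,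
    ← ENNReal.ofReal_mul (by positivity)] at hle2
  exact (ENNReal.ofReal_le_ofReal_iff (by positivity)).mp hle2



/-- For every `α > 2` and `β > 0` there is `c > 0` such that every finite set of links of
length at most `ℓ`, with all endpoints of distinct links mutually at distance more than `c·ℓ`,
is `β`-feasible under uniform power with zero noise. -/
theorem spread_links_feasible (α β : ℝ) (hα : 2 < α) (hβ : 0 < β) :
    ∃ c : ℝ, 0 < c ∧
      ∀ ℓ : ℝ, 0 < ℓ →
      ∀ F : Finset (EuclideanSpace ℝ (Fin 2) × EuclideanSpace ℝ (Fin 2)),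
        (∀ l ∈ F, l.1 ≠ l.2 ∧ dist l.1 l.2 ≤ ℓ) →
        (∀ l ∈ F, ∀ l' ∈ F, l ≠ l' →
          c * ℓ < dist l.1 l'.1 ∧ c * ℓ < dist l.1 l'.2 ∧
          c * ℓ < dist l.2 l'.1 ∧ c * ℓ < dist l.2 l'.2) →
        UniformFeasible α β F := by

  have hα0 : (0:ℝ) < α := by linarith
  set ρ : ℝ := (2:ℝ) ^ (2 - α) with hρdef
  have hρ0 : 0 < ρ := Real.rpow_pos_of_pos two_pos _
  have hρ1 : ρ < 1 := Real.rpow_lt_one_of_one_lt_of_neg one_lt_two (by linarith)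
  have h1ρ : (0:ℝ) < 1 - ρ := by linarith
  have h2α : (0:ℝ) < (2:ℝ) ^ α := Real.rpow_pos_of_pos two_pos _
  set K : ℝ := β * 2 ^ α * 64 / (1 - ρ) with hKdef
  have hK0 : 0 < K := div_pos (by positivity) h1ρ
  set c : ℝ := max 2 (K ^ (α⁻¹)) with hcdef
  have hc2 : (2:ℝ) ≤ c := le_max_left _ _
  have hc0 : (0:ℝ) < c := lt_of_lt_of_le two_pos hc2
  have hcK : K ≤ c ^ α := by
    calc K = (K ^ (α⁻¹)) ^ α := by
          rw [← Real.rpow_mul hK0.le, inv_mul_cancel₀ hα0.ne', Real.rpow_one]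
      _ ≤ c ^ α := Real.rpow_le_rpow (Real.rpow_nonneg hK0.le _) (le_max_right _ _) hα0.le
  refine ⟨c, hc0, ?_⟩
  intro ℓ hℓ F hlen hsep l hl
  have hcl : 0 < c * ℓ := mul_pos hc0 hℓ
  obtain ⟨hne, hlle⟩ := hlen l hl
  have hd0 : 0 < dist l.1 l.2 := dist_pos.mpr hne
  set T := F.erase l with hT
  have hsep' : ∀ l' ∈ T, c * ℓ < dist l'.1 l.2 ∧ c * ℓ < dist l'.2 l.2 := by
    intro l' hl'
    obtain ⟨hll', hl'F⟩ := Finset.mem_erase.mp hl'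
    obtain ⟨-, -, h3, h4⟩ := hsep l hl l' hl'F (Ne.symm hll')
    exact ⟨by rwa [dist_comm], by rwa [dist_comm]⟩
  -- Step B: compare sender distance with receiver distance
  have hB : ∀ l' ∈ T, (dist l'.1 l.2) ^ (-α) ≤ 2 ^ α * (dist l'.2 l.2) ^ (-α) := by
    intro l' hl'
    obtain ⟨hs, hr⟩ := hsep' l' hl'
    have hl'F : l' ∈ F := (Finset.mem_erase.mp hl').2
    have hlen' : dist l'.1 l'.2 ≤ ℓ := (hlen l' hl'F).2
    set D := dist l'.2 l.2 with hD
    have hD0 : 0 < D := lt_trans hcl hr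
    have hhalf : D / 2 ≤ dist l'.1 l.2 := by
      have htri : D ≤ dist l'.2 l'.1 + dist l'.1 l.2 := dist_triangle _ _ _
      rw [dist_comm l'.2 l'.1] at htri
      have hℓD : 2 * ℓ ≤ c * ℓ := by nlinarith
      linarith
    have h1 : (dist l'.1 l.2) ^ (-α) ≤ (D / 2) ^ (-α) :=
      Real.rpow_le_rpow_of_nonpos (by linarith) hhalf (by linarith)
    have h2 : (D / 2 : ℝ) ^ (-α) = 2 ^ α * D ^ (-α) := by
      rw [Real.div_rpow hD0.le (by norm_num : (0:ℝ) ≤ 2),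
        Real.rpow_neg (by norm_num : (0:ℝ) ≤ 2), div_inv_eq_mul, mul_comm]
    rw [h2] at h1
    exact h1
  -- receivers of links in T are pairwise far apart
  have hrecsep : ∀ a ∈ T, ∀ b ∈ T, a ≠ b → c * ℓ < dist a.2 b.2 := by
    intro a ha b hb hab
    exact (hsep a (Finset.mem_erase.mp ha).2 b (Finset.mem_erase.mp hb).2 hab).2.2.2
  -- Step C : sum of receiver-distance interferences
  have hC : ∑ l' ∈ T, (dist l'.2 l.2) ^ (-α) ≤ 64 * (c * ℓ) ^ (-α) * (1 - ρ)⁻¹ := by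
    set jf : EuclideanSpace ℝ (Fin 2) × EuclideanSpace ℝ (Fin 2) → ℕ :=
      fun l' => ⌊Real.logb 2 (dist l'.2 l.2 / (c * ℓ))⌋₊ with hjf
    have key : ∀ j : ℕ, ∑ l' ∈ T.filter (fun l' => jf l' = j), (dist l'.2 l.2) ^ (-α)
        ≤ 64 * (c * ℓ) ^ (-α) * ρ ^ j := by
      intro j
      set S := T.filter (fun l' => jf l' = j) with hS
      have hbound : ∀ l' ∈ S, c * ℓ * 2 ^ j ≤ dist l'.2 l.2 ∧
          dist l'.2 l.2 ≤ c * ℓ * 2 ^ (j + 1) := by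
        intro l' hl'
        obtain ⟨hl'T, hjl'⟩ := Finset.mem_filter.mp hl'
        have hD := (hsep' l' hl'T).2
        have hq1 : 1 < dist l'.2 l.2 / (c * ℓ) := (one_lt_div hcl).mpr hD
        have hq0 : 0 < dist l'.2 l.2 / (c * ℓ) := by linarith
        have hlb0 : 0 ≤ Real.logb 2 (dist l'.2 l.2 / (c * ℓ)) :=
          (Real.logb_pos one_lt_two hq1).le
        have h1 : (j : ℝ) ≤ Real.logb 2 (dist l'.2 l.2 / (c * ℓ)) := by
          rw [← hjl']; exact Nat.floor_le hlb0
        have h2 : Real.logb 2 (dist l'.2 l.2 / (c * ℓ)) < (j : ℝ) + 1 := by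
          rw [← hjl']
          exact Nat.lt_floor_add_one _
        constructor
        · have h3 : (2:ℝ) ^ (j : ℝ) ≤ 2 ^ Real.logb 2 (dist l'.2 l.2 / (c * ℓ)) :=
            Real.rpow_le_rpow_of_exponent_le one_le_two h1
          rw [Real.rpow_logb two_pos (by norm_num) hq0, Real.rpow_natCast] at h3
          have := (le_div_iff₀ hcl).mp h3
          linarith [this]
        · have h3 : (2:ℝ) ^ Real.logb 2 (dist l'.2 l.2 / (c * ℓ)) < 2 ^ ((j : ℝ) + 1) :=
            Real.rpow_lt_rpow_of_exponent_lt one_lt_two h2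
          rw [Real.rpow_logb two_pos (by norm_num) hq0,
            show ((j : ℝ) + 1) = ((j + 1 : ℕ) : ℝ) by push_cast; ring,
            Real.rpow_natCast] at h3
          have := (div_lt_iff₀ hcl).mp h3
          linarith [this]
      have hterm : ∀ l' ∈ S, (dist l'.2 l.2) ^ (-α) ≤ (c * ℓ * 2 ^ j) ^ (-α) := by
        intro l' hl'
        exact Real.rpow_le_rpow_of_nonpos (by positivity) (hbound l' hl').1 (by linarith)
      have hcard : (S.card : ℝ) ≤ 64 * 4 ^ j := by
        have hp := packing_card S (fun l' => l'.2) l.2 hcl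
          (fun a ha b hb hab => hrecsep a (Finset.mem_filter.mp ha).1
            b (Finset.mem_filter.mp hb).1 hab)
          (fun a ha => (hbound a ha).2)
        have hP : (1:ℝ) ≤ 2 ^ j := one_le_pow₀ one_le_two
        have h4 : ((4:ℝ)) ^ j = (2 ^ j) * (2 ^ j) := by
          rw [show (4:ℝ) = 2 * 2 by norm_num, mul_pow]
        have h5 : (c * ℓ * 2 ^ (j + 1) + c * ℓ / 2) ^ 2 ≤ (64 * 4 ^ j) * (c * ℓ / 2) ^ 2 := by
          rw [h4, pow_succ (2:ℝ) j]
          have e1 : 0 ≤ (c * ℓ) ^ 2 * ((2:ℝ) ^ j - 1) :=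
            mul_nonneg (sq_nonneg _) (by linarith)
          have e2 : 0 ≤ (c * ℓ) ^ 2 * ((2:ℝ) ^ j * (2:ℝ) ^ j - (2:ℝ) ^ j) :=
            mul_nonneg (sq_nonneg _) (by nlinarith [hP])
          nlinarith [e1, e2, sq_nonneg (c * ℓ)]
        have h7 : (0:ℝ) < (c * ℓ / 2) ^ 2 := by positivity
        exact le_of_mul_le_mul_right (hp.trans h5) h7
      have hid : (4:ℝ) ^ j * ((2:ℝ) ^ j) ^ (-α) = ρ ^ j := by
        rw [show (4:ℝ) = 2 ^ (2:ℕ) by norm_num, ← pow_mul,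
          ← Real.rpow_natCast 2 (2 * j), ← Real.rpow_natCast 2 j,
          ← Real.rpow_mul (by norm_num : (0:ℝ) ≤ 2), hρdef,
          ← Real.rpow_natCast ((2:ℝ) ^ (2 - α)) j,
          ← Real.rpow_mul (by norm_num : (0:ℝ) ≤ 2),
          ← Real.rpow_add two_pos]
        congr 1
        push_cast
        ring
      calc ∑ l' ∈ S, (dist l'.2 l.2) ^ (-α)
          ≤ ∑ _l' ∈ S, (c * ℓ * 2 ^ j) ^ (-α) := Finset.sum_le_sum hterm
        _ = (S.card : ℝ) * (c * ℓ * 2 ^ j) ^ (-α) := by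
            rw [Finset.sum_const, nsmul_eq_mul]
        _ ≤ (64 * 4 ^ j) * (c * ℓ * 2 ^ j) ^ (-α) :=
            mul_le_mul_of_nonneg_right hcard (Real.rpow_nonneg (by positivity) _)
        _ = 64 * (c * ℓ) ^ (-α) * ρ ^ j := by
            rw [Real.mul_rpow hcl.le (by positivity), ← hid]
            ring
    calc ∑ l' ∈ T, (dist l'.2 l.2) ^ (-α)
        = ∑ j ∈ T.image jf, ∑ l' ∈ T.filter (fun l' => jf l' = j), (dist l'.2 l.2) ^ (-α) :=
          (Finset.sum_fiberwise_of_maps_to (fun l' hl' => Finset.mem_image_of_mem jf hl') _).symm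
      _ ≤ ∑ j ∈ T.image jf, 64 * (c * ℓ) ^ (-α) * ρ ^ j :=
          Finset.sum_le_sum fun j _ => key j
      _ = 64 * (c * ℓ) ^ (-α) * ∑ j ∈ T.image jf, ρ ^ j := by rw [Finset.mul_sum]
      _ ≤ 64 * (c * ℓ) ^ (-α) * (1 - ρ)⁻¹ := by
          refine mul_le_mul_of_nonneg_left ?_ (by positivity)
          have hsummable := summable_geometric_of_lt_one hρ0.le hρ1
          have := Summable.sum_le_tsum (T.image jf) (fun j _ => pow_nonneg hρ0.le j) hsummable
          rwa [tsum_geometric_of_lt_one hρ0.le hρ1] at this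
  -- real-valued main estimate
  have hmain : β * ∑ l' ∈ T, (dist l'.1 l.2) ^ (-α) ≤ ℓ ^ (-α) := by
    have hsum : ∑ l' ∈ T, (dist l'.1 l.2) ^ (-α)
        ≤ 2 ^ α * (64 * (c * ℓ) ^ (-α) * (1 - ρ)⁻¹) := by
      calc ∑ l' ∈ T, (dist l'.1 l.2) ^ (-α)
          ≤ ∑ l' ∈ T, 2 ^ α * (dist l'.2 l.2) ^ (-α) := Finset.sum_le_sum hB
        _ = 2 ^ α * ∑ l' ∈ T, (dist l'.2 l.2) ^ (-α) := (Finset.mul_sum _ _ _).symm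
        _ ≤ 2 ^ α * (64 * (c * ℓ) ^ (-α) * (1 - ρ)⁻¹) :=
            mul_le_mul_of_nonneg_left hC h2α.le
    have hKc : K * c ^ (-α) ≤ 1 := by
      rw [Real.rpow_neg hc0.le]
      have := (div_le_one (Real.rpow_pos_of_pos hc0 α)).mpr hcK
      rwa [div_eq_mul_inv] at this
    calc β * ∑ l' ∈ T, (dist l'.1 l.2) ^ (-α)
        ≤ β * (2 ^ α * (64 * (c * ℓ) ^ (-α) * (1 - ρ)⁻¹)) :=
          mul_le_mul_of_nonneg_left hsum hβ.le
      _ = (K * c ^ (-α)) * ℓ ^ (-α) := by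
          rw [Real.mul_rpow hc0.le hℓ.le, hKdef, div_eq_mul_inv]; ring
      _ ≤ 1 * ℓ ^ (-α) :=
          mul_le_mul_of_nonneg_right hKc (Real.rpow_nonneg hℓ.le _)
      _ = ℓ ^ (-α) := one_mul _
  have hA : ℓ ^ (-α) ≤ (dist l.1 l.2) ^ (-α) :=
    Real.rpow_le_rpow_of_nonpos hd0 hlle (by linarith)
  -- pass to ℝ≥0∞
  have hrw : ∀ l' ∈ T, ENNReal.ofReal (dist l'.1 l.2) ^ (-α)
      = ENNReal.ofReal ((dist l'.1 l.2) ^ (-α)) :=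
    fun l' hl' => ENNReal.ofReal_rpow_of_pos (lt_trans hcl (hsep' l' hl').1)
  calc ENNReal.ofReal β * ∑ l' ∈ T, ENNReal.ofReal (dist l'.1 l.2) ^ (-α)
      = ENNReal.ofReal (β * ∑ l' ∈ T, (dist l'.1 l.2) ^ (-α)) := by
        rw [Finset.sum_congr rfl hrw,
          ← ENNReal.ofReal_sum_of_nonneg (fun l' _ => Real.rpow_nonneg dist_nonneg _),
          ← ENNReal.ofReal_mul hβ.le]
    _ ≤ ENNReal.ofReal ((dist l.1 l.2) ^ (-α)) :=
        ENNReal.ofReal_le_ofReal (le_trans hmain hA)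
    _ = ENNReal.ofReal (dist l.1 l.2) ^ (-α) := (ENNReal.ofReal_rpow_of_pos hd0).symm
end

section
/- For every α > 2 and every β > 0 there exists a constant C > 0 (depending only on α and β) with the following property: for every ℓ > 0, every positive integer s, and every finite set L of links in ℝ² each of length at most ℓ, if every axis-aligned square of side ℓ contains at most s endpoints of links of L, then L can be partitioned into at most C·s sets, each of which is β-feasible under uniform power with zero noise. -/
open Finset
open scoped Classical ENNReal

/-!
Cut the plane into a grid of squares of side `ℓ`. By sparsity each cell holds at most `s`
senders, which we number `0, …, s - 1`. Put two links in the same slot when their cells agree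
modulo `k` in both coordinates and they carry the same number: there are `k² s` slots. Within a
slot the senders other than that of `l` lie in distinct cells `cell l + k v` with `v ∈ ℤ² \ {0}`,
hence at distance at least `‖v‖∞ k ℓ / 2` from the receiver of `l`. The interference at that
receiver is therefore at most `(k ℓ / 2)^(-α) ∑_{v ≠ 0} ‖v‖∞^(-α)`, a convergent lattice sum
because `α > 2`, and for `k` large it is below `ℓ^(-α) / β`.
-/

local notation "ℝ²" => EuclideanSpace ℝ (Fin 2)

section Partition

variable {ι κ : Type*} [DecidableEq ι] [DecidableEq κ]

theorem exists_fibre_partition (L : Finset ι) (key : ι → κ) {K : Finset κ}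
    (hK : ∀ l ∈ L, key l ∈ K) :
    ∃ parts : Finset (Finset ι), parts.card ≤ K.card ∧
      (∀ p ∈ parts, ∃ c, p = L.filter (key · = c)) ∧
      (∀ l ∈ L, ∃ p ∈ parts, l ∈ p) ∧
      (∀ p ∈ parts, ∀ q ∈ parts, p ≠ q → Disjoint p q) := by
  refine ⟨(L.image key).image fun c => L.filter (key · = c), ?_, ?_, ?_, ?_⟩
  · exact card_image_le.trans (card_le_card (image_subset_iff.2 hK))
  · simp only [mem_image]
    rintro p ⟨c, -, rfl⟩
    exact ⟨c, rfl⟩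
  · intro l hl
    exact ⟨L.filter (key · = key l), mem_image_of_mem _ (mem_image_of_mem _ hl), by simp [hl]⟩
  · simp only [mem_image]
    rintro _ ⟨c, -, rfl⟩ _ ⟨c', -, rfl⟩ hne
    refine disjoint_filter.2 fun l _ hc hc' => hne ?_
    rw [← hc, ← hc']

theorem exists_injOn_prod_of_card_fibre_le (L : Finset ι) (f : ι → κ) {s : ℕ}
    (hs : ∀ c, (L.filter (f · = c)).card ≤ s) :
    ∃ r : ι → ℕ, (∀ l ∈ L, r l < s) ∧ Set.InjOn (fun l => (f l, r l)) L := by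
  refine ⟨fun l => (L.filter (f · = f l)).toList.idxOf l, fun l hl => ?_, ?_⟩
  · refine lt_of_lt_of_le ?_ (hs (f l))
    rw [← length_toList, List.idxOf_lt_length_iff, mem_toList, mem_filter]
    exact ⟨hl, rfl⟩
  · rintro l hl l' hl' heq
    simp only [Prod.mk.injEq] at heq
    obtain ⟨hf, hr⟩ := heq
    rw [hf] at hr
    refine (List.idxOf_inj ?_).1 hr
    rw [mem_toList, mem_filter]
    exact ⟨hl, hf⟩

end Partition

section Grid

variable {ι : Type*} [Fintype ι] {ℓ : ℝ}

noncomputable def gridCell (ℓ : ℝ) (x : EuclideanSpace ℝ ι) : ι → ℤ := fun i => ⌊x i / ℓ⌋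

theorem norm_gridCell_sub_le (hℓ : 0 < ℓ) (x y : EuclideanSpace ℝ ι) :
    (‖gridCell ℓ x - gridCell ℓ y‖ - 1) * ℓ ≤ dist x y := by
  rw [← le_div_iff₀ hℓ, sub_le_iff_le_add]
  refine (pi_norm_le_iff_of_nonneg (by positivity)).2 fun i => ?_
  have hfloor : |(⌊x i / ℓ⌋ - ⌊y i / ℓ⌋ : ℝ)| < |x i / ℓ - y i / ℓ| + 1 := by
    rw [abs_sub_lt_iff]
    constructor <;> linarith [Int.floor_le (x i / ℓ), Int.lt_floor_add_one (x i / ℓ),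
      Int.floor_le (y i / ℓ), Int.lt_floor_add_one (y i / ℓ),
      le_abs_self (x i / ℓ - y i / ℓ), neg_abs_le (x i / ℓ - y i / ℓ)]
  have hcoord : |x i / ℓ - y i / ℓ| ≤ dist x y / ℓ := by
    rw [← sub_div, abs_div, abs_of_pos hℓ, ← Real.dist_eq]
    exact div_le_div_of_nonneg_right (PiLp.dist_apply_le x y i) hℓ.le
  simp only [gridCell, Pi.sub_apply, Int.norm_eq_abs, Int.cast_sub]
  linarith

theorem inSquare_of_gridCell_eq (hℓ : 0 < ℓ) {x : ℝ²} {c : Fin 2 → ℤ}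
    (hx : gridCell ℓ x = c) : InSquare (WithLp.toLp 2 fun i => (c i : ℝ) * ℓ) ℓ x := by
  intro i
  subst hx
  simp only [gridCell]
  constructor <;>
    linarith [Int.sub_floor_div_mul_nonneg (x i) hℓ, Int.sub_floor_div_mul_lt (x i) hℓ]

theorem card_filter_gridCell_eq_le (hℓ : 0 < ℓ) {s : ℕ} {L : Finset (ℝ² × ℝ²)}
    (hsparse : ∀ a : ℝ²,
      (L.filter (fun l => InSquare a ℓ l.1)).card +
        (L.filter (fun l => InSquare a ℓ l.2)).card ≤ s)
    (c : Fin 2 → ℤ) : (L.filter (fun l => gridCell ℓ l.1 = c)).card ≤ s := by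
  refine le_trans (card_le_card ?_) ((Nat.le_add_right _ _).trans
    (hsparse (WithLp.toLp 2 fun i => (c i : ℝ) * ℓ)))
  exact monotone_filter_right _ fun l _ hl => inSquare_of_gridCell_eq hℓ hl

theorem natCast_le_norm_of_dvd {k : ℕ} {w : ι → ℤ} (hw : w ≠ 0) (hdvd : ∀ i, (k : ℤ) ∣ w i) :
    (k : ℝ) ≤ ‖w‖ := by
  obtain ⟨i, hi⟩ := Function.ne_iff.1 hw
  calc (k : ℝ) ≤ |(w i : ℝ)| := by
        rw [← Int.cast_abs]
        exact_mod_cast Int.le_of_dvd (abs_pos.2 hi) ((dvd_abs _ _).2 (hdvd i))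
    _ = ‖w i‖ := (Int.norm_eq_abs _).symm
    _ ≤ ‖w‖ := norm_le_pi_norm w i

theorem half_norm_gridCell_sub_mul_le_dist (hℓ : 0 < ℓ) {x y z : EuclideanSpace ℝ ι}
    (hw : 4 ≤ ‖gridCell ℓ x - gridCell ℓ y‖) (hyz : dist y z ≤ ℓ) :
    ‖gridCell ℓ x - gridCell ℓ y‖ * ℓ / 2 ≤ dist x z := by
  have hsep := norm_gridCell_sub_le hℓ x y
  have htri := dist_triangle x z y
  rw [dist_comm z y] at htri
  nlinarith

end Grid

section Interference

theorem sum_norm_rpow_le_of_dvd {ι : Type*} [Fintype ι] {α : ℝ}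
    (hsum : Summable fun v : ι → ℤ => ‖v‖ ^ (-α)) {k : ℕ} (hk : 0 < k)
    {W : Finset (ι → ℤ)} (hW : ∀ w ∈ W, ∀ i, (k : ℤ) ∣ w i) :
    ∑ w ∈ W, ‖w‖ ^ (-α) ≤ (k : ℝ) ^ (-α) * ∑' v : ι → ℤ, ‖v‖ ^ (-α) := by
  set quot : (ι → ℤ) → ι → ℤ := fun w i => w i / k
  have hmul : ∀ w ∈ W, w = (k : ℤ) • quot w := fun w hw =>
    funext fun i => (Int.mul_ediv_cancel' (hW w hw i)).symm
  calc ∑ w ∈ W, ‖w‖ ^ (-α) = ∑ w ∈ W, (k : ℝ) ^ (-α) * ‖quot w‖ ^ (-α) := by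
        refine sum_congr rfl fun w hw => ?_
        conv_lhs => rw [hmul w hw]
        rw [norm_smul, Int.norm_natCast, Real.mul_rpow (by positivity) (norm_nonneg _)]
    _ = (k : ℝ) ^ (-α) * ∑ v ∈ W.image quot, ‖v‖ ^ (-α) := by
        rw [← mul_sum, sum_image fun w hw w' hw' h => by rw [hmul w hw, hmul w' hw', h]]
    _ ≤ (k : ℝ) ^ (-α) * ∑' v : ι → ℤ, ‖v‖ ^ (-α) :=
        mul_le_mul_of_nonneg_left (hsum.sum_le_tsum _ fun _ _ => by positivity) (by positivity)

theorem uniformFeasible_of_real {α β : ℝ} (hβ : 0 ≤ β) {F : Finset (ℝ² × ℝ²)}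
    (hpos : ∀ l ∈ F, ∀ l' ∈ F, 0 < dist l'.1 l.2)
    (hreal : ∀ l ∈ F, β * ∑ l' ∈ F.erase l, dist l'.1 l.2 ^ (-α) ≤ dist l.1 l.2 ^ (-α)) :
    UniformFeasible α β F := by
  intro l hl
  have hofReal : ∀ l' ∈ F,
      ENNReal.ofReal (dist l'.1 l.2) ^ (-α) = ENNReal.ofReal (dist l'.1 l.2 ^ (-α)) :=
    fun l' hl' => ENNReal.ofReal_rpow_of_pos (hpos l hl l' hl')
  rw [sum_congr rfl fun l' hl' => hofReal l' (mem_of_mem_erase hl'), hofReal l hl,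
    ← ENNReal.ofReal_sum_of_nonneg fun _ _ => by positivity, ← ENNReal.ofReal_mul hβ]
  exact ENNReal.ofReal_le_ofReal (hreal l hl)

variable {α ℓ : ℝ} {k : ℕ} {F : Finset (ℝ² × ℝ²)}

theorem four_le_norm_gridCell_sub (hk : 4 ≤ k)
    (hinj : Set.InjOn (fun l : ℝ² × ℝ² => gridCell ℓ l.1) F)
    (hdvd : ∀ l ∈ F, ∀ l' ∈ F, ∀ i, (k : ℤ) ∣ gridCell ℓ l'.1 i - gridCell ℓ l.1 i)
    {l l'} (hl : l ∈ F) (hl' : l' ∈ F) (hne : l' ≠ l) :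
    4 ≤ ‖gridCell ℓ l'.1 - gridCell ℓ l.1‖ :=
  le_trans (by exact_mod_cast hk)
    (natCast_le_norm_of_dvd (sub_ne_zero.2 fun h => hne (hinj hl' hl h)) (hdvd l hl l' hl'))

theorem sum_dist_rpow_le_of_gridCell (hα : 2 < α) (hℓ : 0 < ℓ) (hk : 4 ≤ k)
    (hlink : ∀ l ∈ F, dist l.1 l.2 ≤ ℓ)
    (hinj : Set.InjOn (fun l : ℝ² × ℝ² => gridCell ℓ l.1) F)
    (hdvd : ∀ l ∈ F, ∀ l' ∈ F, ∀ i, (k : ℤ) ∣ gridCell ℓ l'.1 i - gridCell ℓ l.1 i)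
    {l} (hl : l ∈ F) :
    ∑ l' ∈ F.erase l, dist l'.1 l.2 ^ (-α) ≤
      (k * ℓ / 2) ^ (-α) * ∑' v : Fin 2 → ℤ, ‖v‖ ^ (-α) := by
  set w := fun l' : ℝ² × ℝ² => gridCell ℓ l'.1 - gridCell ℓ l.1
  calc ∑ l' ∈ F.erase l, dist l'.1 l.2 ^ (-α)
      ≤ ∑ l' ∈ F.erase l, (ℓ / 2) ^ (-α) * ‖w l'‖ ^ (-α) := by
        refine sum_le_sum fun l' hl' => ?_
        obtain ⟨hne, hl'F⟩ := mem_erase.1 hl'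
        have hw := four_le_norm_gridCell_sub hk hinj hdvd hl hl'F hne
        rw [mul_comm, ← Real.mul_rpow (norm_nonneg _) (by positivity), ← mul_div_assoc]
        exact Real.rpow_le_rpow_of_nonpos (by positivity)
          (half_norm_gridCell_sub_mul_le_dist hℓ hw (hlink l hl)) (by linarith)
    _ = (ℓ / 2) ^ (-α) * ∑ v ∈ (F.erase l).image w, ‖v‖ ^ (-α) := by
        rw [← mul_sum, sum_image fun x hx y hy h =>
          hinj (mem_of_mem_erase hx) (mem_of_mem_erase hy) (sub_left_inj.1 h)]
    _ ≤ (ℓ / 2) ^ (-α) * ((k : ℝ) ^ (-α) * ∑' v : Fin 2 → ℤ, ‖v‖ ^ (-α)) := by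
        refine mul_le_mul_of_nonneg_left (sum_norm_rpow_le_of_dvd
          (EisensteinSeries.summable_one_div_norm_rpow hα) (by omega) ?_) (by positivity)
        simp only [mem_image]
        rintro _ ⟨l', hl', rfl⟩
        exact hdvd l hl l' (mem_of_mem_erase hl')
    _ = (k * ℓ / 2) ^ (-α) * ∑' v : Fin 2 → ℤ, ‖v‖ ^ (-α) := by
        rw [← mul_assoc, ← Real.mul_rpow (by positivity) (by positivity)]
        ring_nf

theorem uniformFeasible_of_gridCell_injOn {β : ℝ} (hα : 2 < α) (hβ : 0 ≤ β) (hℓ : 0 < ℓ)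
    (hk : 4 ≤ k) (hkβ : β * ∑' v : Fin 2 → ℤ, ‖v‖ ^ (-α) ≤ ((k : ℝ) / 2) ^ α)
    (hlink : ∀ l ∈ F, l.1 ≠ l.2 ∧ dist l.1 l.2 ≤ ℓ)
    (hinj : Set.InjOn (fun l : ℝ² × ℝ² => gridCell ℓ l.1) F)
    (hdvd : ∀ l ∈ F, ∀ l' ∈ F, ∀ i, (k : ℤ) ∣ gridCell ℓ l'.1 i - gridCell ℓ l.1 i) :
    UniformFeasible α β F := by
  have hbound := fun l (hl : l ∈ F) =>
    sum_dist_rpow_le_of_gridCell hα hℓ hk (fun l hl => (hlink l hl).2) hinj hdvd hl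
  refine uniformFeasible_of_real hβ (fun l hl l' hl' => ?_) fun l hl => ?_
  · rcases eq_or_ne l' l with rfl | hne
    · exact dist_pos.2 (hlink l' hl).1
    · have hw := four_le_norm_gridCell_sub hk hinj hdvd hl hl' hne
      have := half_norm_gridCell_sub_mul_le_dist hℓ hw (hlink l hl).2
      nlinarith
  have hk0 : (0 : ℝ) < k / 2 := by positivity
  calc β * ∑ l' ∈ F.erase l, dist l'.1 l.2 ^ (-α)
      ≤ (k / 2 * ℓ) ^ (-α) * (β * ∑' v : Fin 2 → ℤ, ‖v‖ ^ (-α)) := by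
        rw [mul_left_comm, div_mul_eq_mul_div]
        exact mul_le_mul_of_nonneg_left (hbound l hl) hβ
    _ ≤ (k / 2 * ℓ) ^ (-α) * ((k : ℝ) / 2) ^ α := by gcongr
    _ = ℓ ^ (-α) := by
        rw [Real.mul_rpow hk0.le hℓ.le, Real.rpow_neg hk0.le]
        field_simp
    _ ≤ dist l.1 l.2 ^ (-α) :=
        Real.rpow_le_rpow_of_nonpos (dist_pos.2 (hlink l hl).1) (hlink l hl).2 (by linarith)

end Interference

theorem exists_nat_le_half_rpow {α : ℝ} (hα : 1 ≤ α) (M : ℝ) :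
    ∃ k : ℕ, 4 ≤ k ∧ M ≤ ((k : ℝ) / 2) ^ α := by
  refine ⟨2 * ⌈M⌉₊ + 4, by omega, ?_⟩
  have hhalf : ((2 * ⌈M⌉₊ + 4 : ℕ) : ℝ) / 2 = ⌈M⌉₊ + 2 := by push_cast; ring
  have hceil : (0 : ℝ) ≤ ⌈M⌉₊ := Nat.cast_nonneg _
  rw [hhalf]
  calc M ≤ (⌈M⌉₊ + 2 : ℝ) ^ (1 : ℝ) := by rw [Real.rpow_one]; linarith [Nat.le_ceil M]
    _ ≤ (⌈M⌉₊ + 2 : ℝ) ^ α := Real.rpow_le_rpow_of_exponent_le (by linarith) hα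

noncomputable def slot (ℓ : ℝ) (k : ℕ) (r : ℝ² × ℝ² → ℕ) (l : ℝ² × ℝ²) : (Fin 2 → ℤ) × ℕ :=
  (fun i => gridCell ℓ l.1 i % k, r l)

theorem slot_mem {ℓ : ℝ} {k s : ℕ} {r : ℝ² × ℝ² → ℕ} (hk : 0 < k) {l : ℝ² × ℝ²} (hr : r l < s) :
    slot ℓ k r l ∈ Fintype.piFinset (fun _ => Ico (0 : ℤ) k) ×ˢ range s :=
  mem_product.2 ⟨Fintype.mem_piFinset.2 fun _ =>
    mem_Ico.2 ⟨Int.emod_nonneg _ (by omega), Int.emod_lt_of_pos _ (by omega)⟩, mem_range.2 hr⟩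

theorem uniformFeasible_filter_slot_eq {α β ℓ : ℝ} {k : ℕ} {r : ℝ² × ℝ² → ℕ}
    {L : Finset (ℝ² × ℝ²)} (hα : 2 < α) (hβ : 0 ≤ β) (hℓ : 0 < ℓ) (hk : 4 ≤ k)
    (hkβ : β * ∑' v : Fin 2 → ℤ, ‖v‖ ^ (-α) ≤ ((k : ℝ) / 2) ^ α)
    (hlink : ∀ l ∈ L, l.1 ≠ l.2 ∧ dist l.1 l.2 ≤ ℓ)
    (hinj : Set.InjOn (fun l => (gridCell ℓ l.1, r l)) L) (c : (Fin 2 → ℤ) × ℕ) :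
    UniformFeasible α β (L.filter (slot ℓ k r · = c)) := by
  refine uniformFeasible_of_gridCell_injOn hα hβ hℓ hk hkβ
    (fun l hl => hlink l (mem_filter.1 hl).1) ?_ ?_
  · rintro l hl l' hl' h
    rw [mem_coe, mem_filter] at hl hl'
    have hr : r l = r l' := congrArg Prod.snd (hl.2.trans hl'.2.symm)
    exact hinj hl.1 hl'.1 (Prod.ext h hr)
  · intro l hl l' hl' i
    rw [mem_filter] at hl hl'
    exact Int.ModEq.dvd (congrFun (congrArg Prod.fst (hl.2.trans hl'.2.symm)) i)

/-- For every `α > 2` and `β > 0` there is `C > 0` such that every `s`-sparse finite set of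
links of length at most `ℓ` (every square of side `ℓ` contains at most `s` link endpoints) can
be partitioned into at most `C·s` sets, each `β`-feasible under uniform power with zero
noise. -/
theorem sparse_links_few_slots (α β : ℝ) (hα : 2 < α) (hβ : 0 < β) :
    ∃ C : ℝ, 0 < C ∧
      ∀ ℓ : ℝ, 0 < ℓ → ∀ s : ℕ, 0 < s →
      ∀ L : Finset (EuclideanSpace ℝ (Fin 2) × EuclideanSpace ℝ (Fin 2)),
        (∀ l ∈ L, l.1 ≠ l.2 ∧ dist l.1 l.2 ≤ ℓ) →
        (∀ a : EuclideanSpace ℝ (Fin 2),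
          (L.filter (fun l => InSquare a ℓ l.1)).card +
            (L.filter (fun l => InSquare a ℓ l.2)).card ≤ s) →
        ∃ parts : Finset (Finset (EuclideanSpace ℝ (Fin 2) × EuclideanSpace ℝ (Fin 2))),
          (parts.card : ℝ) ≤ C * s ∧
          (∀ p ∈ parts, UniformFeasible α β p) ∧
          (∀ p ∈ parts, p ⊆ L) ∧
          (∀ l ∈ L, ∃ p ∈ parts, l ∈ p) ∧
          (∀ p ∈ parts, ∀ q ∈ parts, p ≠ q → Disjoint p q) := by
  obtain ⟨k, hk, hkβ⟩ := exists_nat_le_half_rpow (by linarith : 1 ≤ α)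
    (β * ∑' v : Fin 2 → ℤ, ‖v‖ ^ (-α))
  refine ⟨(k : ℝ) ^ 2, by positivity, fun ℓ hℓ s _ L hlink hsparse => ?_⟩
  obtain ⟨r, hr, hinj⟩ := exists_injOn_prod_of_card_fibre_le L (fun l => gridCell ℓ l.1)
    (card_filter_gridCell_eq_le hℓ hsparse)
  obtain ⟨parts, hcard, hfibre, hcover, hdisj⟩ :=
    exists_fibre_partition L (slot ℓ k r) fun l hl => slot_mem (by omega) (hr l hl)
  refine ⟨parts, ?_, fun p hp => ?_, fun p hp => ?_, hcover, hdisj⟩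
  · have : parts.card ≤ k ^ 2 * s := by
      simpa [card_product, Fintype.card_piFinset_const] using hcard
    exact_mod_cast this
  · obtain ⟨c, rfl⟩ := hfibre p hp
    exact uniformFeasible_filter_slot_eq hα hβ.le hℓ hk hkβ hlink hinj c
  · obtain ⟨c, rfl⟩ := hfibre p hp
    exact filter_subset _ _
end

section
/- Let n > 0 and m ≥ 1 be real numbers, and let (n_k)_{k≥1} be a nonincreasing sequence of nonnegative reals such that for every k ≥ 1, n_k ≥ (n − Σ_{j<k} n_j)/m. Then Σ_{j=1}^{⌈m⌉} n_j ≥ n/2. -/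
/-! With `c = ⌈m⌉` and `S` the sum of the first `c` terms, the hypothesis at `k = c` gives
`n - S ≤ n - Σ_{j<c} n_j ≤ m n_c ≤ c n_c ≤ S`, the last step because `n_c` is the smallest of
the `c` terms. -/

open Finset

theorem Finset.nsmul_le_sum_Icc_of_antitoneOn {M : Type*} [AddCommMonoid M] [PartialOrder M]
    [IsOrderedAddMonoid M] {f : ℕ → M} {a : ℕ} (hf : AntitoneOn f (Set.Ici a)) (b : ℕ) :
    (b + 1 - a) • f b ≤ ∑ j ∈ Icc a b, f j := by
  rw [← Nat.card_Icc]
  refine card_nsmul_le_sum _ _ _ fun j hj ↦ ?_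
  obtain ⟨haj, hjb⟩ := mem_Icc.mp hj
  exact hf haj (haj.trans hjb) hjb

theorem halving_sequence_general (n m : ℝ) (hm : 1 ≤ m) (f : ℕ → ℝ)
    (hnonneg : ∀ k, 1 ≤ k → 0 ≤ f k)
    (hmono : ∀ k, 1 ≤ k → f (k + 1) ≤ f k)
    (hrec : ∀ k, 1 ≤ k → (n - ∑ j ∈ Finset.Ico 1 k, f j) / m ≤ f k) :
    n / 2 ≤ ∑ j ∈ Finset.Icc 1 ⌈m⌉₊, f j := by
  set c := ⌈m⌉₊
  have hc : 1 ≤ c := Nat.one_le_ceil_iff.mpr (by linarith)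
  have hfc : 0 ≤ f c := hnonneg c hc
  have hsplit : ∑ j ∈ Icc 1 c, f j = ∑ j ∈ Ico 1 c, f j + f c := by
    rw [← Ico_insert_right hc, sum_insert right_notMem_Ico, add_comm]
  have htail : n - ∑ j ∈ Ico 1 c, f j ≤ m * f c :=
    (div_le_iff₀' (by linarith)).mp (hrec c hc)
  have hhead : c * f c ≤ ∑ j ∈ Icc 1 c, f j := by
    simpa using nsmul_le_sum_Icc_of_antitoneOn (antitoneOn_nat_Ici_of_succ_le hmono) c
  have hceil : m * f c ≤ c * f c := mul_le_mul_of_nonneg_right (Nat.le_ceil m) hfc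
  linarith

/-- If `(n_k)_{k ≥ 1}` is nonincreasing, nonnegative, and satisfies
`n_k ≥ (n − Σ_{j<k} n_j)/m` for all `k ≥ 1` (with `n > 0`, `m ≥ 1`), then the first `⌈m⌉`
terms sum to at least `n/2`. -/
theorem halving_sequence (n m : ℝ) (hn : 0 < n) (hm : 1 ≤ m) (f : ℕ → ℝ)
    (hnonneg : ∀ k, 1 ≤ k → 0 ≤ f k)
    (hmono : ∀ k, 1 ≤ k → f (k + 1) ≤ f k)
    (hrec : ∀ k, 1 ≤ k → (n - ∑ j ∈ Finset.Ico 1 k, f j) / m ≤ f k) :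
    n / 2 ≤ ∑ j ∈ Finset.Icc 1 ⌈m⌉₊, f j :=
  halving_sequence_general n m hm f hnonneg hmono hrec
end
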